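/- Soundness of the cyclic system G3PDLω: if a sequent Γ ⊢ Δ is derivable in G3PDLω (i.e. has a cyclic proof whose infinite unfolding satisfies the global trace condition), then Γ ⊢ Δ is valid. -/
import Mathlib


set_option maxHeartbeats 1000000

/-! ### Syntax of PDL -/

mutual
inductive PDLFormula : Type
  | bot : PDLFormula
  | atom : ℕ → PDLFormula
  | and : PDLFormula → PDLFormula → PDLFormula
  | or : PDLFormula → PDLFormula → PDLFormula
  | imp : PDLFormula → PDLFormula → PDLFormula
  | box : PDLProgram → PDLFormula → PDLFormula
  deriving DecidableEq

inductive PDLProgram : Type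
  | atom : ℕ → PDLProgram
  | comp : PDLProgram → PDLProgram → PDLProgram
  | choice : PDLProgram → PDLProgram → PDLProgram
  | test : PDLFormula → PDLProgram
  | star : PDLProgram → PDLProgram
  deriving DecidableEq
end

/-! ### Semantics of PDL -/

structure PDLModel where
  State : Type
  propI : ℕ → Set State
  progI : ℕ → Set (State × State)

mutual
def PDLFormula.sem (m : PDLModel) : PDLFormula → Set m.State
  | .bot => ∅
  | .atom p => m.propI p
  | .and φ ψ => PDLFormula.sem m φ ∩ PDLFormula.sem m ψ
  | .or φ ψ => PDLFormula.sem m φ ∪ PDLFormula.sem m ψ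
  | .imp φ ψ => (PDLFormula.sem m φ)ᶜ ∪ PDLFormula.sem m ψ
  | .box α φ => { s | ∀ t, (s, t) ∈ PDLProgram.sem m α → t ∈ PDLFormula.sem m φ }

def PDLProgram.sem (m : PDLModel) : PDLProgram → Set (m.State × m.State)
  | .atom a => m.progI a
  | .comp α β => { p | ∃ t, (p.1, t) ∈ PDLProgram.sem m α ∧ (t, p.2) ∈ PDLProgram.sem m β }
  | .choice α β => PDLProgram.sem m α ∪ PDLProgram.sem m β
  | .test φ => { p | p.1 = p.2 ∧ p.1 ∈ PDLFormula.sem m φ }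
  | .star α => { p | Relation.ReflTransGen (fun s t => (s, t) ∈ PDLProgram.sem m α) p.1 p.2 }
end

/-! ### Labelled sequents -/

abbrev Label := ℕ

inductive SeqElem : Type
  | rel : Label → ℕ → Label → SeqElem
  | lab : Label → PDLFormula → SeqElem
  deriving DecidableEq

structure Sequent where
  ant : Finset SeqElem
  suc : Finset SeqElem

def SeqElem.sat (m : PDLModel) (v : Label → m.State) : SeqElem → Prop
  | .rel x a y => (v x, v y) ∈ m.progI a
  | .lab x φ => v x ∈ PDLFormula.sem m φ

def Sequent.valid (S : Sequent) : Prop :=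
  ∀ (m : PDLModel) (v : Label → m.State),
    (∀ A ∈ S.ant, A.sat m v) → ∃ B ∈ S.suc, B.sat m v

def Sequent.falsifiedBy (S : Sequent) (m : PDLModel) (v : Label → m.State) : Prop :=
  (∀ A ∈ S.ant, A.sat m v) ∧ ∀ B ∈ S.suc, ¬ B.sat m v

/-! ### Labels, starred labels, reachability -/

def SeqElem.labels : SeqElem → Finset Label
  | .rel x _ y => {x, y}
  | .lab x _ => {x}

def labs (Γ : Finset SeqElem) : Finset Label := Γ.biUnion SeqElem.labels

def starred (Δ : Finset SeqElem) : Set Label :=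
  { x | ∃ α φ, SeqElem.lab x (PDLFormula.box (PDLProgram.star α) φ) ∈ Δ }

def relStep (Γ : Finset SeqElem) (x y : Label) : Prop := ∃ a, SeqElem.rel x a y ∈ Γ

/-- `x` reaches `y` through a (possibly empty) chain of relational atoms of `Γ`. -/
def reaches (Γ : Finset SeqElem) : Label → Label → Prop := Relation.ReflTransGen (relStep Γ)

/-- A set of relational atoms is acyclic when no label reaches itself via a nonempty chain. -/
def RelAcyclic (Γ : Finset SeqElem) : Prop := ∀ x, ¬ Relation.TransGen (relStep Γ) x x

def Sequent.Acyclic (S : Sequent) : Prop := RelAcyclic S.ant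

/-! ### Classification of formulas, normal sequents -/

def PDLFormula.isAtomic : PDLFormula → Prop
  | .bot => True
  | .atom _ => True
  | _ => False

def PDLFormula.isIterated : PDLFormula → Prop
  | .box (.star _) _ => True
  | _ => False

def SeqElem.isRel : SeqElem → Prop
  | .rel _ _ _ => True
  | _ => False

def NormalSeq (S : Sequent) : Prop :=
  (∀ A ∈ S.ant, A ∉ S.suc) ∧
  (∀ A ∈ S.suc, ∃ x φ, A = SeqElem.lab x φ ∧ (φ.isAtomic ∨ φ.isIterated)) ∧
  (∀ A ∈ S.ant, A.isRel ∨ ∃ x φ, A = SeqElem.lab x φ ∧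
      (φ.isAtomic ∨ ∃ a ψ, φ = PDLFormula.box (PDLProgram.atom a) ψ ∧
        ∀ y, SeqElem.rel x a y ∉ S.ant))

/-! ### Test-freeness and subformulas -/

mutual
def PDLFormula.TestFree : PDLFormula → Prop
  | .bot => True
  | .atom _ => True
  | .and φ ψ => PDLFormula.TestFree φ ∧ PDLFormula.TestFree ψ
  | .or φ ψ => PDLFormula.TestFree φ ∧ PDLFormula.TestFree ψ
  | .imp φ ψ => PDLFormula.TestFree φ ∧ PDLFormula.TestFree ψ
  | .box α φ => PDLProgram.TestFree α ∧ PDLFormula.TestFree φ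

def PDLProgram.TestFree : PDLProgram → Prop
  | .atom _ => True
  | .comp α β => PDLProgram.TestFree α ∧ PDLProgram.TestFree β
  | .choice α β => PDLProgram.TestFree α ∧ PDLProgram.TestFree β
  | .test _ => False
  | .star α => PDLProgram.TestFree α
end

def SeqElem.TestFree : SeqElem → Prop
  | .rel _ _ _ => True
  | .lab _ φ => φ.TestFree

def Sequent.TestFree (S : Sequent) : Prop :=
  (∀ A ∈ S.ant, A.TestFree) ∧ (∀ A ∈ S.suc, A.TestFree)

mutual
inductive Subf : PDLFormula → PDLFormula → Prop
  | refl (φ) : Subf φ φ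
  | andl {χ φ ψ} : Subf χ φ → Subf χ (PDLFormula.and φ ψ)
  | andr {χ φ ψ} : Subf χ ψ → Subf χ (PDLFormula.and φ ψ)
  | orl {χ φ ψ} : Subf χ φ → Subf χ (PDLFormula.or φ ψ)
  | orr {χ φ ψ} : Subf χ ψ → Subf χ (PDLFormula.or φ ψ)
  | impl {χ φ ψ} : Subf χ φ → Subf χ (PDLFormula.imp φ ψ)
  | impr {χ φ ψ} : Subf χ ψ → Subf χ (PDLFormula.imp φ ψ)
  | boxf {χ α φ} : Subf χ φ → Subf χ (PDLFormula.box α φ)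
  | boxp {χ α φ} : SubfP χ α → Subf χ (PDLFormula.box α φ)

inductive SubfP : PDLFormula → PDLProgram → Prop
  | compl {χ α β} : SubfP χ α → SubfP χ (PDLProgram.comp α β)
  | compr {χ α β} : SubfP χ β → SubfP χ (PDLProgram.comp α β)
  | choicel {χ α β} : SubfP χ α → SubfP χ (PDLProgram.choice α β)
  | choicer {χ α β} : SubfP χ β → SubfP χ (PDLProgram.choice α β)
  | test {χ φ} : Subf χ φ → SubfP χ (PDLProgram.test φ)
  | star {χ α} : SubfP χ α → SubfP χ (PDLProgram.star α)
end

/-! ### Label substitution -/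

def substLabel (x y z : Label) : Label := if z = x then y else z

def SeqElem.subst (x y : Label) : SeqElem → SeqElem
  | .rel z a w => .rel (substLabel x y z) a (substLabel x y w)
  | .lab z φ => .lab (substLabel x y z) φ
/-! ### Trace values -/

structure TraceValue where
  label : Label
  spine : List PDLProgram
  focus : PDLProgram
  formula : PDLFormula
  deriving DecidableEq

/-- The labelled formula `x : [α₁]…[αₙ][β*]φ` denoted by a trace value. -/
def TraceValue.toFormula (τ : TraceValue) : PDLFormula :=
  τ.spine.foldr PDLFormula.box (PDLFormula.box (PDLProgram.star τ.focus) τ.formula)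

def TraceValue.toElem (τ : TraceValue) : SeqElem := SeqElem.lab τ.label τ.toFormula

/-- `[γ]τ`: prepend a program to the spine of a trace value. -/
def TraceValue.push (γ : PDLProgram) (τ : TraceValue) : TraceValue :=
  ⟨τ.label, γ :: τ.spine, τ.focus, τ.formula⟩

/-! ### Rule applications of G3PDL -/

inductive RuleApp : Type
  | ax (A : SeqElem)
  | botL (x : Label)
  | wl (A : SeqElem) (Γ Δ : Finset SeqElem)
  | wr (A : SeqElem) (Γ Δ : Finset SeqElem)
  | andL (x : Label) (φ ψ : PDLFormula) (Γ Δ : Finset SeqElem)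
  | andR (x : Label) (φ ψ : PDLFormula) (Γ Δ : Finset SeqElem)
  | orL (x : Label) (φ ψ : PDLFormula) (Γ Δ : Finset SeqElem)
  | orR (x : Label) (φ ψ : PDLFormula) (Γ Δ : Finset SeqElem)
  | impL (x : Label) (φ ψ : PDLFormula) (Γ Δ : Finset SeqElem)
  | impR (x : Label) (φ ψ : PDLFormula) (Γ Δ : Finset SeqElem)
  | boxL (x : Label) (a : ℕ) (y : Label) (φ : PDLFormula) (Γ Δ : Finset SeqElem)
  | boxR (x : Label) (a : ℕ) (y : Label) (φ : PDLFormula) (Γ Δ : Finset SeqElem)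
  | compL (x : Label) (α β : PDLProgram) (φ : PDLFormula) (Γ Δ : Finset SeqElem)
  | compR (x : Label) (α β : PDLProgram) (φ : PDLFormula) (Γ Δ : Finset SeqElem)
  | choiceL (x : Label) (α β : PDLProgram) (φ : PDLFormula) (Γ Δ : Finset SeqElem)
  | choiceR (x : Label) (α β : PDLProgram) (φ : PDLFormula) (Γ Δ : Finset SeqElem)
  | testL (x : Label) (φ ψ : PDLFormula) (Γ Δ : Finset SeqElem)
  | testR (x : Label) (φ ψ : PDLFormula) (Γ Δ : Finset SeqElem)
  | starL (x : Label) (α : PDLProgram) (φ : PDLFormula) (Γ Δ : Finset SeqElem)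
  | starR (x : Label) (α : PDLProgram) (φ : PDLFormula) (Γ Δ : Finset SeqElem)
  | subst (x y : Label) (Γ Δ : Finset SeqElem)
  | cut (A : SeqElem) (Γ Δ Γ₂ Δ₂ : Finset SeqElem)
  deriving DecidableEq

namespace RuleApp

/-- Conclusion of a rule application. -/
def conc : RuleApp → Sequent
  | ax A => ⟨{A}, {A}⟩
  | botL x => ⟨{SeqElem.lab x PDLFormula.bot}, ∅⟩
  | wl A Γ Δ => ⟨insert A Γ, Δ⟩
  | wr A Γ Δ => ⟨Γ, insert A Δ⟩
  | andL x φ ψ Γ Δ => ⟨insert (SeqElem.lab x (PDLFormula.and φ ψ)) Γ, Δ⟩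
  | andR x φ ψ Γ Δ => ⟨Γ, insert (SeqElem.lab x (PDLFormula.and φ ψ)) Δ⟩
  | orL x φ ψ Γ Δ => ⟨insert (SeqElem.lab x (PDLFormula.or φ ψ)) Γ, Δ⟩
  | orR x φ ψ Γ Δ => ⟨Γ, insert (SeqElem.lab x (PDLFormula.or φ ψ)) Δ⟩
  | impL x φ ψ Γ Δ => ⟨insert (SeqElem.lab x (PDLFormula.imp φ ψ)) Γ, Δ⟩
  | impR x φ ψ Γ Δ => ⟨Γ, insert (SeqElem.lab x (PDLFormula.imp φ ψ)) Δ⟩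
  | boxL x a y φ Γ Δ =>
      ⟨insert (SeqElem.lab x (PDLFormula.box (PDLProgram.atom a) φ)) (insert (SeqElem.rel x a y) Γ), Δ⟩
  | boxR x a _ φ Γ Δ => ⟨Γ, insert (SeqElem.lab x (PDLFormula.box (PDLProgram.atom a) φ)) Δ⟩
  | compL x α β φ Γ Δ => ⟨insert (SeqElem.lab x (PDLFormula.box (PDLProgram.comp α β) φ)) Γ, Δ⟩
  | compR x α β φ Γ Δ => ⟨Γ, insert (SeqElem.lab x (PDLFormula.box (PDLProgram.comp α β) φ)) Δ⟩
  | choiceL x α β φ Γ Δ => ⟨insert (SeqElem.lab x (PDLFormula.box (PDLProgram.choice α β) φ)) Γ, Δ⟩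
  | choiceR x α β φ Γ Δ => ⟨Γ, insert (SeqElem.lab x (PDLFormula.box (PDLProgram.choice α β) φ)) Δ⟩
  | testL x φ ψ Γ Δ => ⟨insert (SeqElem.lab x (PDLFormula.box (PDLProgram.test φ) ψ)) Γ, Δ⟩
  | testR x φ ψ Γ Δ => ⟨Γ, insert (SeqElem.lab x (PDLFormula.box (PDLProgram.test φ) ψ)) Δ⟩
  | starL x α φ Γ Δ => ⟨insert (SeqElem.lab x (PDLFormula.box (PDLProgram.star α) φ)) Γ, Δ⟩
  | starR x α φ Γ Δ => ⟨Γ, insert (SeqElem.lab x (PDLFormula.box (PDLProgram.star α) φ)) Δ⟩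
  | subst x y Γ Δ => ⟨Γ.image (SeqElem.subst x y), Δ.image (SeqElem.subst x y)⟩
  | cut _ Γ Δ Γ₂ Δ₂ => ⟨Γ ∪ Γ₂, Δ ∪ Δ₂⟩

/-- Premises of a rule application. -/
def prems : RuleApp → List Sequent
  | ax _ => []
  | botL _ => []
  | wl _ Γ Δ => [⟨Γ, Δ⟩]
  | wr _ Γ Δ => [⟨Γ, Δ⟩]
  | andL x φ ψ Γ Δ => [⟨insert (SeqElem.lab x φ) (insert (SeqElem.lab x ψ) Γ), Δ⟩]
  | andR x φ ψ Γ Δ => [⟨Γ, insert (SeqElem.lab x φ) Δ⟩, ⟨Γ, insert (SeqElem.lab x ψ) Δ⟩]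
  | orL x φ ψ Γ Δ => [⟨insert (SeqElem.lab x φ) Γ, Δ⟩, ⟨insert (SeqElem.lab x ψ) Γ, Δ⟩]
  | orR x φ ψ Γ Δ => [⟨Γ, insert (SeqElem.lab x φ) (insert (SeqElem.lab x ψ) Δ)⟩]
  | impL x φ ψ Γ Δ => [⟨Γ, insert (SeqElem.lab x φ) Δ⟩, ⟨insert (SeqElem.lab x ψ) Γ, Δ⟩]
  | impR x φ ψ Γ Δ => [⟨insert (SeqElem.lab x φ) Γ, insert (SeqElem.lab x ψ) Δ⟩]
  | boxL _ _ y φ Γ Δ => [⟨insert (SeqElem.lab y φ) Γ, Δ⟩]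
  | boxR x a y φ Γ Δ => [⟨insert (SeqElem.rel x a y) Γ, insert (SeqElem.lab y φ) Δ⟩]
  | compL x α β φ Γ Δ => [⟨insert (SeqElem.lab x (PDLFormula.box α (PDLFormula.box β φ))) Γ, Δ⟩]
  | compR x α β φ Γ Δ => [⟨Γ, insert (SeqElem.lab x (PDLFormula.box α (PDLFormula.box β φ))) Δ⟩]
  | choiceL x α β φ Γ Δ =>
      [⟨insert (SeqElem.lab x (PDLFormula.box α φ)) (insert (SeqElem.lab x (PDLFormula.box β φ)) Γ), Δ⟩]
  | choiceR x α β φ Γ Δ =>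
      [⟨Γ, insert (SeqElem.lab x (PDLFormula.box α φ)) Δ⟩, ⟨Γ, insert (SeqElem.lab x (PDLFormula.box β φ)) Δ⟩]
  | testL x φ ψ Γ Δ => [⟨Γ, insert (SeqElem.lab x φ) Δ⟩, ⟨insert (SeqElem.lab x ψ) Γ, Δ⟩]
  | testR x φ ψ Γ Δ => [⟨insert (SeqElem.lab x φ) Γ, insert (SeqElem.lab x ψ) Δ⟩]
  | starL x α φ Γ Δ =>
      [⟨insert (SeqElem.lab x φ)
          (insert (SeqElem.lab x (PDLFormula.box α (PDLFormula.box (PDLProgram.star α) φ))) Γ), Δ⟩]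
  | starR x α φ Γ Δ =>
      [⟨Γ, insert (SeqElem.lab x φ) Δ⟩,
       ⟨Γ, insert (SeqElem.lab x (PDLFormula.box α (PDLFormula.box (PDLProgram.star α) φ))) Δ⟩]
  | subst _ _ Γ Δ => [⟨Γ, Δ⟩]
  | cut A Γ Δ Γ₂ Δ₂ => [⟨Γ, insert A Δ⟩, ⟨insert A Γ₂, Δ₂⟩]

/-- Side conditions: the fresh-label condition of (□R). -/
def wf : RuleApp → Prop
  | boxR x _ y _ Γ Δ => y ∉ labs Γ ∧ y ∉ labs Δ ∧ y ≠ x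
  | _ => True

/-- `(τ, τ')` is a trace pair for (conclusion, `i`-th premise) of the rule application. -/
def tracePair : RuleApp → ℕ → TraceValue → TraceValue → Prop
  | ax _, _, _, _ => False
  | botL _, _, _, _ => False
  | wl _ _ Δ, i, τ, τ' => i = 0 ∧ τ.toElem ∈ Δ ∧ τ' = τ
  | wr _ _ Δ, i, τ, τ' => i = 0 ∧ τ.toElem ∈ Δ ∧ τ' = τ
  | andL _ _ _ _ Δ, i, τ, τ' => i = 0 ∧ τ.toElem ∈ Δ ∧ τ' = τ
  | andR _ _ _ _ Δ, i, τ, τ' => i < 2 ∧ τ.toElem ∈ Δ ∧ τ' = τ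
  | orL _ _ _ _ Δ, i, τ, τ' => i < 2 ∧ τ.toElem ∈ Δ ∧ τ' = τ
  | orR _ _ _ _ Δ, i, τ, τ' => i = 0 ∧ τ.toElem ∈ Δ ∧ τ' = τ
  | impL _ _ _ _ Δ, i, τ, τ' => i < 2 ∧ τ.toElem ∈ Δ ∧ τ' = τ
  | impR _ _ _ _ Δ, i, τ, τ' => i = 0 ∧ τ.toElem ∈ Δ ∧ τ' = τ
  | boxL _ _ _ _ _ Δ, i, τ, τ' => i = 0 ∧ τ.toElem ∈ Δ ∧ τ' = τ
  | boxR x a y φ _ Δ, i, τ, τ' => i = 0 ∧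
      ((τ.toElem ∈ Δ ∧ τ' = τ) ∨
       (τ'.toElem = SeqElem.lab y φ ∧
        τ = ⟨x, PDLProgram.atom a :: τ'.spine, τ'.focus, τ'.formula⟩))
  | compL _ _ _ _ _ Δ, i, τ, τ' => i = 0 ∧ τ.toElem ∈ Δ ∧ τ' = τ
  | compR x α β φ _ Δ, i, τ, τ' => i = 0 ∧
      ((τ.toElem ∈ Δ ∧ τ' = τ) ∨
       (∃ σ : TraceValue, σ.toElem = SeqElem.lab x φ ∧
          τ = σ.push (PDLProgram.comp α β) ∧ τ' = (σ.push β).push α))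
  | choiceL _ _ _ _ _ Δ, i, τ, τ' => i = 0 ∧ τ.toElem ∈ Δ ∧ τ' = τ
  | choiceR x α β φ _ Δ, i, τ, τ' => i < 2 ∧
      ((τ.toElem ∈ Δ ∧ τ' = τ) ∨
       (∃ σ : TraceValue, σ.toElem = SeqElem.lab x φ ∧
          τ = σ.push (PDLProgram.choice α β) ∧ τ' = σ.push (if i = 0 then α else β)))
  | testL _ _ _ _ Δ, i, τ, τ' => i < 2 ∧ τ.toElem ∈ Δ ∧ τ' = τ
  | testR x φ ψ _ Δ, i, τ, τ' => i = 0 ∧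
      ((τ.toElem ∈ Δ ∧ τ' = τ) ∨
       (τ'.toElem = SeqElem.lab x ψ ∧ τ = τ'.push (PDLProgram.test φ)))
  | starL _ _ _ _ Δ, i, τ, τ' => i = 0 ∧ τ.toElem ∈ Δ ∧ τ' = τ
  | starR x α φ _ Δ, i, τ, τ' =>
      (i = 0 ∧ ((τ.toElem ∈ Δ ∧ τ' = τ) ∨
         (τ'.toElem = SeqElem.lab x φ ∧ τ = τ'.push (PDLProgram.star α)))) ∨
      (i = 1 ∧ ((τ.toElem ∈ Δ ∧ τ' = τ) ∨
         (τ.toElem = SeqElem.lab x (PDLFormula.box (PDLProgram.star α) φ) ∧ τ' = τ.push α)))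
  | subst x y _ Δ, i, τ, τ' => i = 0 ∧ τ'.toElem ∈ Δ ∧
      τ = ⟨substLabel x y τ'.label, τ'.spine, τ'.focus, τ'.formula⟩
  | cut _ _ Δ _ Δ₂, i, τ, τ' =>
      (i = 0 ∧ τ.toElem ∈ Δ ∧ τ' = τ) ∨ (i = 1 ∧ τ.toElem ∈ Δ₂ ∧ τ' = τ)

/-- Progressing trace pairs: the principal formula of a (∗R) right premise with empty spine. -/
def progressing : RuleApp → ℕ → TraceValue → TraceValue → Prop
  | starR x α φ _ _, i, τ, τ' => i = 1 ∧ τ = ⟨x, [], α, φ⟩ ∧ τ' = τ.push α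
  | _, _, _, _ => False

/-! #### Classification of rule applications -/

def isCut : RuleApp → Prop | cut _ _ _ _ _ => True | _ => False
def isSubst : RuleApp → Prop | subst _ _ _ _ => True | _ => False
def isWeak : RuleApp → Prop | wl _ _ _ => True | wr _ _ _ => True | _ => False

/-- Rules allowed when closing a leaf: weakenings, (Ax) and (⊥). -/
def isClosing : RuleApp → Prop
  | wl _ _ _ => True | wr _ _ _ => True | ax _ => True | botL _ => True | _ => False

/-- The logical rules: all rules except weakening, (Subst) and (Cut). -/
def isLogical : RuleApp → Prop
  | wl _ _ _ => False | wr _ _ _ => False | subst _ _ _ _ => False | cut _ _ _ _ _ => False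
  | _ => True

/-- The left logical rules. -/
def isLeftLogical : RuleApp → Prop
  | andL _ _ _ _ _ => True | orL _ _ _ _ _ => True | impL _ _ _ _ _ => True
  | boxL _ _ _ _ _ _ => True | compL _ _ _ _ _ _ => True | choiceL _ _ _ _ _ _ => True
  | testL _ _ _ _ _ => True | starL _ _ _ _ _ => True
  | _ => False

/-- The rule instance consumes its principal labelled formula (it does not also occur in the
context), and (for □L) preserves the relational atom. -/
def consumes : RuleApp → Prop
  | andL x φ ψ Γ _ => SeqElem.lab x (PDLFormula.and φ ψ) ∉ Γ
  | andR x φ ψ _ Δ => SeqElem.lab x (PDLFormula.and φ ψ) ∉ Δ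
  | orL x φ ψ Γ _ => SeqElem.lab x (PDLFormula.or φ ψ) ∉ Γ
  | orR x φ ψ _ Δ => SeqElem.lab x (PDLFormula.or φ ψ) ∉ Δ
  | impL x φ ψ Γ _ => SeqElem.lab x (PDLFormula.imp φ ψ) ∉ Γ
  | impR x φ ψ _ Δ => SeqElem.lab x (PDLFormula.imp φ ψ) ∉ Δ
  | boxL x a y φ Γ _ =>
      SeqElem.lab x (PDLFormula.box (PDLProgram.atom a) φ) ∉ Γ ∧ SeqElem.rel x a y ∈ Γ
  | boxR x a _ φ _ Δ => SeqElem.lab x (PDLFormula.box (PDLProgram.atom a) φ) ∉ Δ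
  | compL x α β φ Γ _ => SeqElem.lab x (PDLFormula.box (PDLProgram.comp α β) φ) ∉ Γ
  | compR x α β φ _ Δ => SeqElem.lab x (PDLFormula.box (PDLProgram.comp α β) φ) ∉ Δ
  | choiceL x α β φ Γ _ => SeqElem.lab x (PDLFormula.box (PDLProgram.choice α β) φ) ∉ Γ
  | choiceR x α β φ _ Δ => SeqElem.lab x (PDLFormula.box (PDLProgram.choice α β) φ) ∉ Δ
  | testL x φ ψ Γ _ => SeqElem.lab x (PDLFormula.box (PDLProgram.test φ) ψ) ∉ Γ
  | testR x φ ψ _ Δ => SeqElem.lab x (PDLFormula.box (PDLProgram.test φ) ψ) ∉ Δ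
  | starL x α φ Γ _ => SeqElem.lab x (PDLFormula.box (PDLProgram.star α) φ) ∉ Γ
  | starR x α φ _ Δ => SeqElem.lab x (PDLFormula.box (PDLProgram.star α) φ) ∉ Δ
  | _ => True

/-- `B` (in the antecedent of the `i`-th premise) is an immediate ancestor of `A`
(in the antecedent of the conclusion). -/
def antAncestor : RuleApp → ℕ → SeqElem → SeqElem → Prop
  | ax _, _, _, _ => False
  | botL _, _, _, _ => False
  | wl _ Γ _, i, A, B => i = 0 ∧ A ∈ Γ ∧ B = A
  | wr _ Γ _, i, A, B => i = 0 ∧ A ∈ Γ ∧ B = A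
  | andL x φ ψ Γ _, i, A, B => i = 0 ∧
      ((A ∈ Γ ∧ B = A) ∨
       (A = SeqElem.lab x (PDLFormula.and φ ψ) ∧ (B = SeqElem.lab x φ ∨ B = SeqElem.lab x ψ)))
  | andR _ _ _ Γ _, i, A, B => i < 2 ∧ A ∈ Γ ∧ B = A
  | orL x φ ψ Γ _, i, A, B => i < 2 ∧
      ((A ∈ Γ ∧ B = A) ∨
       (A = SeqElem.lab x (PDLFormula.or φ ψ) ∧ B = SeqElem.lab x (if i = 0 then φ else ψ)))
  | orR _ _ _ Γ _, i, A, B => i = 0 ∧ A ∈ Γ ∧ B = A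
  | impL x φ ψ Γ _, i, A, B =>
      (i = 0 ∧ A ∈ Γ ∧ B = A) ∨
      (i = 1 ∧ ((A ∈ Γ ∧ B = A) ∨
        (A = SeqElem.lab x (PDLFormula.imp φ ψ) ∧ B = SeqElem.lab x ψ)))
  | impR _ _ _ Γ _, i, A, B => i = 0 ∧ A ∈ Γ ∧ B = A
  | boxL x a y φ Γ _, i, A, B => i = 0 ∧
      ((A ∈ Γ ∧ B = A) ∨
       (A = SeqElem.lab x (PDLFormula.box (PDLProgram.atom a) φ) ∧ B = SeqElem.lab y φ))
  | boxR _ _ _ _ Γ _, i, A, B => i = 0 ∧ A ∈ Γ ∧ B = A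
  | compL x α β φ Γ _, i, A, B => i = 0 ∧
      ((A ∈ Γ ∧ B = A) ∨
       (A = SeqElem.lab x (PDLFormula.box (PDLProgram.comp α β) φ) ∧
        B = SeqElem.lab x (PDLFormula.box α (PDLFormula.box β φ))))
  | compR _ _ _ _ Γ _, i, A, B => i = 0 ∧ A ∈ Γ ∧ B = A
  | choiceL x α β φ Γ _, i, A, B => i = 0 ∧
      ((A ∈ Γ ∧ B = A) ∨
       (A = SeqElem.lab x (PDLFormula.box (PDLProgram.choice α β) φ) ∧
        (B = SeqElem.lab x (PDLFormula.box α φ) ∨ B = SeqElem.lab x (PDLFormula.box β φ))))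
  | choiceR _ _ _ _ Γ _, i, A, B => i < 2 ∧ A ∈ Γ ∧ B = A
  | testL x φ ψ Γ _, i, A, B =>
      (i = 0 ∧ A ∈ Γ ∧ B = A) ∨
      (i = 1 ∧ ((A ∈ Γ ∧ B = A) ∨
        (A = SeqElem.lab x (PDLFormula.box (PDLProgram.test φ) ψ) ∧ B = SeqElem.lab x ψ)))
  | testR _ _ _ Γ _, i, A, B => i = 0 ∧ A ∈ Γ ∧ B = A
  | starL x α φ Γ _, i, A, B => i = 0 ∧
      ((A ∈ Γ ∧ B = A) ∨
       (A = SeqElem.lab x (PDLFormula.box (PDLProgram.star α) φ) ∧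
        (B = SeqElem.lab x φ ∨
         B = SeqElem.lab x (PDLFormula.box α (PDLFormula.box (PDLProgram.star α) φ)))))
  | starR _ _ _ Γ _, i, A, B => i < 2 ∧ A ∈ Γ ∧ B = A
  | subst x y Γ _, i, A, B => i = 0 ∧ B ∈ Γ ∧ A = B.subst x y
  | cut _ Γ _ Γ₂ _, i, A, B =>
      (i = 0 ∧ A ∈ Γ ∧ B = A) ∨ (i = 1 ∧ A ∈ Γ₂ ∧ B = A)

/-- `B` (in the consequent of the `i`-th premise) is an immediate ancestor of `A`
(in the consequent of the conclusion). -/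
def sucAncestor : RuleApp → ℕ → SeqElem → SeqElem → Prop
  | ax _, _, _, _ => False
  | botL _, _, _, _ => False
  | wl _ _ Δ, i, A, B => i = 0 ∧ A ∈ Δ ∧ B = A
  | wr _ _ Δ, i, A, B => i = 0 ∧ A ∈ Δ ∧ B = A
  | andL _ _ _ _ Δ, i, A, B => i = 0 ∧ A ∈ Δ ∧ B = A
  | andR x φ ψ _ Δ, i, A, B => i < 2 ∧
      ((A ∈ Δ ∧ B = A) ∨
       (A = SeqElem.lab x (PDLFormula.and φ ψ) ∧ B = SeqElem.lab x (if i = 0 then φ else ψ)))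
  | orL _ _ _ _ Δ, i, A, B => i < 2 ∧ A ∈ Δ ∧ B = A
  | orR x φ ψ _ Δ, i, A, B => i = 0 ∧
      ((A ∈ Δ ∧ B = A) ∨
       (A = SeqElem.lab x (PDLFormula.or φ ψ) ∧ (B = SeqElem.lab x φ ∨ B = SeqElem.lab x ψ)))
  | impL _ _ _ _ Δ, i, A, B => i < 2 ∧ A ∈ Δ ∧ B = A
  | impR x φ ψ _ Δ, i, A, B => i = 0 ∧
      ((A ∈ Δ ∧ B = A) ∨ (A = SeqElem.lab x (PDLFormula.imp φ ψ) ∧ B = SeqElem.lab x ψ))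
  | boxL _ _ _ _ _ Δ, i, A, B => i = 0 ∧ A ∈ Δ ∧ B = A
  | boxR x a y φ _ Δ, i, A, B => i = 0 ∧
      ((A ∈ Δ ∧ B = A) ∨
       (A = SeqElem.lab x (PDLFormula.box (PDLProgram.atom a) φ) ∧ B = SeqElem.lab y φ))
  | compL _ _ _ _ _ Δ, i, A, B => i = 0 ∧ A ∈ Δ ∧ B = A
  | compR x α β φ _ Δ, i, A, B => i = 0 ∧
      ((A ∈ Δ ∧ B = A) ∨
       (A = SeqElem.lab x (PDLFormula.box (PDLProgram.comp α β) φ) ∧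
        B = SeqElem.lab x (PDLFormula.box α (PDLFormula.box β φ))))
  | choiceL _ _ _ _ _ Δ, i, A, B => i = 0 ∧ A ∈ Δ ∧ B = A
  | choiceR x α β φ _ Δ, i, A, B => i < 2 ∧
      ((A ∈ Δ ∧ B = A) ∨
       (A = SeqElem.lab x (PDLFormula.box (PDLProgram.choice α β) φ) ∧
        B = SeqElem.lab x (PDLFormula.box (if i = 0 then α else β) φ)))
  | testL _ _ _ _ Δ, i, A, B => i < 2 ∧ A ∈ Δ ∧ B = A
  | testR x φ ψ _ Δ, i, A, B => i = 0 ∧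
      ((A ∈ Δ ∧ B = A) ∨
       (A = SeqElem.lab x (PDLFormula.box (PDLProgram.test φ) ψ) ∧ B = SeqElem.lab x ψ))
  | starL _ _ _ _ Δ, i, A, B => i = 0 ∧ A ∈ Δ ∧ B = A
  | starR x α φ _ Δ, i, A, B => i < 2 ∧
      ((A ∈ Δ ∧ B = A) ∨
       (A = SeqElem.lab x (PDLFormula.box (PDLProgram.star α) φ) ∧
        B = SeqElem.lab x (if i = 0 then φ
              else PDLFormula.box α (PDLFormula.box (PDLProgram.star α) φ))))
  | subst x y _ Δ, i, A, B => i = 0 ∧ B ∈ Δ ∧ A = B.subst x y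
  | cut _ _ Δ _ Δ₂, i, A, B =>
      (i = 0 ∧ A ∈ Δ ∧ B = A) ∨ (i = 1 ∧ A ∈ Δ₂ ∧ B = A)

end RuleApp
/-! ### Derivations: possibly infinite trees of rule applications, with open leaves -/

/-- A node of a derivation: either a rule application, or an open leaf with its sequent. -/
abbrev DNode := Sum RuleApp Sequent

def DNode.concl : DNode → Sequent := Sum.elim RuleApp.conc id

/-- A (possibly infinite, possibly open) derivation, presented as an assignment of nodes to
the addresses (lists of child indices) of an infinitely-branching tree. -/
structure Deriv where
  node : List ℕ → Option DNode
  wf_rule : ∀ p r, node p = some (Sum.inl r) → r.wf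
  children : ∀ p r, node p = some (Sum.inl r) →
      ∀ i, (node (p ++ [i])).map DNode.concl = r.prems[i]?
  leaf_no_children : ∀ p S, node p = some (Sum.inr S) → ∀ i, node (p ++ [i]) = none
  tree_closed : ∀ p i, node p = none → node (p ++ [i]) = none

namespace Deriv

def ruleAt (D : Deriv) (p : List ℕ) : Option RuleApp :=
  match D.node p with
  | some (Sum.inl r) => some r
  | _ => none

def openAt (D : Deriv) (p : List ℕ) : Option Sequent :=
  match D.node p with
  | some (Sum.inr S) => some S
  | _ => none

def seqAt (D : Deriv) (p : List ℕ) : Option Sequent := (D.node p).map DNode.concl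

def Finite (D : Deriv) : Prop := { p | (D.node p).isSome }.Finite

def NoOpen (D : Deriv) : Prop := ∀ p S, D.node p ≠ some (Sum.inr S)

end Deriv

/-! ### Infinite paths, traces and the global trace condition -/

/-- The address of the `n`-th node on the infinite branch determined by the sequence `f` of
child indices. -/
def pathAddr (f : ℕ → ℕ) (n : ℕ) : List ℕ := (List.range n).map f

/-- `f` determines an infinite path in the derivation tree whose rules are given by `R`. -/
def IsInfPath (R : List ℕ → Option RuleApp) (f : ℕ → ℕ) : Prop :=
  ∀ n, (R (pathAddr f n)).isSome

/-- The infinite path determined by `f` is followed (from some point `N` on) by an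
infinitely progressing trace. -/
def FollowedByProgTrace (R : List ℕ → Option RuleApp) (f : ℕ → ℕ) : Prop :=
  ∃ (N : ℕ) (g : ℕ → TraceValue),
    (∀ k, ∃ r, R (pathAddr f (N + k)) = some r ∧
        RuleApp.tracePair r (f (N + k)) (g k) (g (k + 1))) ∧
    (∀ m, ∃ k, m ≤ k ∧ ∃ r, R (pathAddr f (N + k)) = some r ∧
        RuleApp.progressing r (f (N + k)) (g k) (g (k + 1)))

/-- The global trace condition. -/
def GTC (R : List ℕ → Option RuleApp) : Prop :=
  ∀ f, IsInfPath R f → FollowedByProgTrace R f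

/-- A `G3PDL∞` proof of `S`: a pre-proof (derivation without open leaves) whose root sequent is
`S` and which satisfies the global trace condition. -/
def Deriv.IsProofOf (D : Deriv) (S : Sequent) : Prop :=
  D.seqAt [] = some S ∧ D.NoOpen ∧ GTC D.ruleAt

/-! ### Finite traces along finite paths in a derivation -/

/-- `tr` is a trace covering the path from the node at address `base` to the node at address
`base ++ tail`. -/
def CoversFrom (D : Deriv) (base tail : List ℕ) (tr : List TraceValue) : Prop :=
  tr.length = tail.length + 1 ∧
  ∀ i r j τ τ', D.ruleAt (base ++ tail.take i) = some r → tail[i]? = some j →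
    tr[i]? = some τ → tr[i + 1]? = some τ' → RuleApp.tracePair r j τ τ'

/-- The trace `tr` covering the path from `base` along `tail` progresses at position `i`. -/
def ProgAtFrom (D : Deriv) (base tail : List ℕ) (tr : List TraceValue) (i : ℕ) : Prop :=
  ∃ r j τ τ', D.ruleAt (base ++ tail.take i) = some r ∧ tail[i]? = some j ∧
    tr[i]? = some τ ∧ tr[i + 1]? = some τ' ∧ RuleApp.progressing r j τ τ'

/-! ### Cyclic derivations and their unfoldings -/

/-- Dereference an address: at an ordinary node stay put, at a bud jump to its companion. -/
def Deriv.deref (D : Deriv) (c : List ℕ → Option (List ℕ)) (p : List ℕ) : Option (List ℕ) :=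
  match D.node p with
  | some (Sum.inl _) => some p
  | some (Sum.inr _) => c p
  | none => none

/-- The address (in the finite tree) of the node corresponding to the address `p` of the
infinite unfolding. -/
def Deriv.unfoldAddr (D : Deriv) (c : List ℕ → Option (List ℕ)) (p : List ℕ) :
    Option (List ℕ) :=
  p.foldl (fun q i => q.bind fun q' => D.deref c (q' ++ [i])) (D.deref c [])

/-- The rule applied at address `p` of the infinite unfolding of the cyclic derivation. -/
def Deriv.unfoldRule (D : Deriv) (c : List ℕ → Option (List ℕ)) (p : List ℕ) :
    Option RuleApp :=
  (D.unfoldAddr c p).bind fun q => D.ruleAt q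

/-- Each bud assigned a companion must be assigned an internal node carrying a syntactically
identical sequent. -/
def CompanionCond (D : Deriv) (c : List ℕ → Option (List ℕ)) : Prop :=
  ∀ p S, D.node p = some (Sum.inr S) →
    ∀ q, c p = some q → ∃ r, D.node q = some (Sum.inl r) ∧ RuleApp.conc r = S

/-- Every bud is assigned a companion. -/
def FullCompanion (D : Deriv) (c : List ℕ → Option (List ℕ)) : Prop :=
  ∀ p S, D.node p = some (Sum.inr S) → ∃ q, c p = some q

/-- `S` is derivable in the cyclic system `G3PDLω`: there is a finite derivation tree, with each
bud assigned a companion, whose infinite unfolding satisfies the global trace condition. -/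
def CyclicDerivable (S : Sequent) : Prop :=
  ∃ (D : Deriv) (c : List ℕ → Option (List ℕ)),
    D.seqAt [] = some S ∧ D.Finite ∧ CompanionCond D c ∧ FullCompanion D c ∧
    GTC (D.unfoldRule c)

/-! ### Auxiliary: counterexample certificates -/

section Soundness

open PDLFormula PDLProgram

/-- A concrete path through a program. -/
inductive CPath (m : PDLModel) : m.State → PDLProgram → m.State → Type
  | atom {s t a} : (s, t) ∈ m.progI a → CPath m s (.atom a) t
  | comp {s u t α β} : CPath m s α u → CPath m u β t → CPath m s (.comp α β) t
  | choicel {s t α β} : CPath m s α t → CPath m s (.choice α β) t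
  | choicer {s t α β} : CPath m s β t → CPath m s (.choice α β) t
  | test {s φ} : s ∈ PDLFormula.sem m φ → CPath m s (.test φ) s
  | star_refl {s α} : CPath m s (.star α) s
  | star_step {s u t α} : CPath m s α u → CPath m u (.star α) t → CPath m s (.star α) t

/-- A counterexample certificate for a formula at a state. -/
inductive Cex (m : PDLModel) : m.State → PDLFormula → Type
  | bot {s} : Cex m s .bot
  | atom {s p} : s ∉ m.propI p → Cex m s (.atom p)
  | andl {s φ ψ} : Cex m s φ → Cex m s (.and φ ψ)
  | andr {s φ ψ} : Cex m s ψ → Cex m s (.and φ ψ)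
  | or {s φ ψ} : Cex m s φ → Cex m s ψ → Cex m s (.or φ ψ)
  | imp {s φ ψ} : s ∈ PDLFormula.sem m φ → Cex m s ψ → Cex m s (.imp φ ψ)
  | box {s t α φ} : CPath m s α t → Cex m t φ → Cex m s (.box α φ)

/-- Total number of star-unfoldings recorded in a path. -/
def CPath.w {m : PDLModel} : ∀ {s α t}, CPath m s α t → ℕ
  | _, _, _, .atom _ => 0
  | _, _, _, .comp p q => p.w + q.w
  | _, _, _, .choicel p => p.w
  | _, _, _, .choicer p => p.w
  | _, _, _, .test _ => 0
  | _, _, _, .star_refl => 0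
  | _, _, _, .star_step p q => p.w + q.w + 1

/-- Total number of star-unfoldings recorded in a certificate. -/
def Cex.w {m : PDLModel} : ∀ {s φ}, Cex m s φ → ℕ
  | _, _, .bot => 0
  | _, _, .atom _ => 0
  | _, _, .andl c => c.w
  | _, _, .andr c => c.w
  | _, _, .or c d => c.w + d.w
  | _, _, .imp _ c => c.w
  | _, _, .box p c => p.w + c.w

theorem CPath.sound {m : PDLModel} : ∀ {s α t}, CPath m s α t → (s, t) ∈ PDLProgram.sem m α
  | _, _, _, .atom h => h
  | _, _, _, .comp p q => ⟨_, p.sound, q.sound⟩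
  | _, _, _, .choicel p => Or.inl p.sound
  | _, _, _, .choicer p => Or.inr p.sound
  | _, _, _, .test h => ⟨rfl, h⟩
  | _, _, _, .star_refl => Relation.ReflTransGen.refl
  | _, _, _, .star_step p q => Relation.ReflTransGen.head p.sound q.sound

theorem Cex.sound {m : PDLModel} : ∀ {s φ}, Cex m s φ → s ∉ PDLFormula.sem m φ
  | _, _, .bot => fun h => h.elim
  | _, _, .atom h => h
  | _, _, .andl c => fun h => c.sound h.1
  | _, _, .andr c => fun h => c.sound h.2
  | _, _, .or c d => fun h => h.elim c.sound d.sound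
  | _, _, .imp hs c => fun h => h.elim (fun h' => h' hs) c.sound
  | _, _, .box p c => fun h => c.sound (h _ p.sound)

theorem CPath.exists' {m : PDLModel} :
    ∀ (α : PDLProgram) (s t : m.State), (s, t) ∈ PDLProgram.sem m α → Nonempty (CPath m s α t)
  | .atom a, _, _, h => ⟨.atom h⟩
  | .comp α β, s, t, h => by
      obtain ⟨u, h1, h2⟩ := h
      obtain ⟨p⟩ := CPath.exists' α s u h1
      obtain ⟨q⟩ := CPath.exists' β u t h2
      exact ⟨.comp p q⟩
  | .choice α β, s, t, h => by
      rcases h with h | h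
      · obtain ⟨p⟩ := CPath.exists' α s t h; exact ⟨.choicel p⟩
      · obtain ⟨p⟩ := CPath.exists' β s t h; exact ⟨.choicer p⟩
  | .test φ, s, t, h => by
      have heq : s = t := h.1
      subst heq
      exact ⟨.test h.2⟩
  | .star α, s, t, h => by
      have h' : Relation.ReflTransGen (fun a b => (a, b) ∈ PDLProgram.sem m α) s t := h
      clear h
      induction h' using Relation.ReflTransGen.head_induction_on with
      | refl => exact ⟨.star_refl⟩
      | head hstep _ ih =>
          obtain ⟨p⟩ := CPath.exists' α _ _ hstep
          obtain ⟨q⟩ := ih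
          exact ⟨.star_step p q⟩

theorem Cex.exists' {m : PDLModel} :
    ∀ (φ : PDLFormula) (s : m.State), s ∉ PDLFormula.sem m φ → Nonempty (Cex m s φ)
  | .bot, _, _ => ⟨.bot⟩
  | .atom p, s, h => ⟨.atom h⟩
  | .and φ ψ, s, h => by
      by_cases hφ : s ∈ PDLFormula.sem m φ
      · have hψ : s ∉ PDLFormula.sem m ψ := fun hψ => h ⟨hφ, hψ⟩
        obtain ⟨c⟩ := Cex.exists' ψ s hψ; exact ⟨.andr c⟩
      · obtain ⟨c⟩ := Cex.exists' φ s hφ; exact ⟨.andl c⟩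
  | .or φ ψ, s, h => by
      obtain ⟨c⟩ := Cex.exists' φ s (fun h' => h (Or.inl h'))
      obtain ⟨d⟩ := Cex.exists' ψ s (fun h' => h (Or.inr h'))
      exact ⟨.or c d⟩
  | .imp φ ψ, s, h => by
      have hφ : s ∈ PDLFormula.sem m φ := by
        by_contra h'; exact h (Or.inl h')
      obtain ⟨c⟩ := Cex.exists' ψ s (fun h' => h (Or.inr h'))
      exact ⟨.imp hφ c⟩
  | .box α φ, s, h => by
      have : ¬ ∀ t, (s, t) ∈ PDLProgram.sem m α → t ∈ PDLFormula.sem m φ := h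
      push_neg at this
      obtain ⟨t, h1, h2⟩ := this
      obtain ⟨p⟩ := CPath.exists' α s t h1
      obtain ⟨c⟩ := Cex.exists' φ t h2
      exact ⟨.box p c⟩


/-! ### Refutation data for sequent elements -/

def RefAt (m : PDLModel) (v : Label → m.State) : SeqElem → Type
  | .rel x a y => PLift ((v x, v y) ∉ m.progI a)
  | .lab x φ => Cex m (v x) φ

def refW {m : PDLModel} {v : Label → m.State} : ∀ (B : SeqElem), RefAt m v B → ℕ
  | .rel _ _ _, _ => 0
  | .lab _ _, c => Cex.w c

theorem refAt_not_sat {m : PDLModel} {v : Label → m.State} :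
    ∀ (B : SeqElem), RefAt m v B → ¬ B.sat m v
  | .rel _ _ _, c => c.down
  | .lab _ _, c => c.sound

noncomputable def mkRef {m : PDLModel} {v : Label → m.State} :
    ∀ (B : SeqElem), ¬ B.sat m v → RefAt m v B
  | .rel _ _ _, h => ⟨h⟩
  | .lab x φ, h => Classical.choice (Cex.exists' φ (v x) h)

theorem cex_w_cast {m : PDLModel} {φ : PDLFormula} :
    ∀ {t t' : m.State} (e : t = t') (c : Cex m t φ), Cex.w (e ▸ c) = c.w := by
  rintro t t' rfl c; rfl

def RefAt.transport {m : PDLModel} {v v' : Label → m.State} :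
    ∀ {B : SeqElem}, (∀ l ∈ B.labels, v' l = v l) → RefAt m v B → RefAt m v' B
  | .rel x a y, h, c => ⟨by
      rw [h x (by simp [SeqElem.labels]), h y (by simp [SeqElem.labels])]
      exact c.down⟩
  | .lab x φ, h, c =>
      show Cex m (v' x) φ from (h x (by simp [SeqElem.labels])).symm ▸ (c : Cex m (v x) φ)

theorem refW_transport {m : PDLModel} {v v' : Label → m.State} :
    ∀ {B : SeqElem} (h : ∀ l ∈ B.labels, v' l = v l) (c : RefAt m v B),
      refW B (RefAt.transport h c) = refW B c
  | .rel _ _ _, _, _ => rfl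
  | .lab x φ, h, c => cex_w_cast _ c

theorem sat_transport {m : PDLModel} {v v' : Label → m.State} :
    ∀ {B : SeqElem}, (∀ l ∈ B.labels, v' l = v l) → B.sat m v → B.sat m v'
  | .rel x a y, h, hs => by
      show (v' x, v' y) ∈ _
      rw [h x (by simp [SeqElem.labels]), h y (by simp [SeqElem.labels])]
      exact hs
  | .lab x φ, h, hs => by
      show v' x ∈ _
      rw [h x (by simp [SeqElem.labels])]
      exact hs

/-! ### Falsification packages -/

structure FPack (m : PDLModel) (S : Sequent) where
  v : Label → m.State
  hant : ∀ A ∈ S.ant, A.sat m v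
  ref : ∀ B ∈ S.suc, RefAt m v B

noncomputable def FPack.mw {m : PDLModel} {S : Sequent} (P : FPack m S) (E : SeqElem) : ℕ :=
  if h : E ∈ S.suc then refW E (P.ref E h) else 0

theorem FPack.mw_eq {m : PDLModel} {S : Sequent} (P : FPack m S) {E : SeqElem}
    (h : E ∈ S.suc) : P.mw E = refW E (P.ref E h) := dif_pos h

def castRef {m : PDLModel} {v : Label → m.State} {E B : SeqElem} (h : E = B)
    (c : RefAt m v E) : RefAt m v B := h ▸ c

theorem refW_castRef {m : PDLModel} {v : Label → m.State} {E B : SeqElem} (h : E = B)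
    (c : RefAt m v E) : refW B (castRef h c) = refW E c := by cases h; rfl

noncomputable def addCert {m : PDLModel} {v : Label → m.State} {Δ : Finset SeqElem}
    (old : ∀ B ∈ Δ, RefAt m v B) (E : SeqElem) (cE : RefAt m v E) :
    ∀ B ∈ insert E Δ, RefAt m v B :=
  fun B hB =>
    if hE : B = E then
      (if hΔ : B ∈ Δ then
        (if refW B (old B hΔ) ≤ refW E cE then old B hΔ else castRef hE.symm cE)
       else castRef hE.symm cE)
    else old B ((Finset.mem_insert.mp hB).resolve_left hE)

theorem addCert_w_mem {m : PDLModel} {v : Label → m.State} {Δ : Finset SeqElem}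
    (old : ∀ B ∈ Δ, RefAt m v B) (E : SeqElem) (cE : RefAt m v E)
    {B : SeqElem} (hΔ : B ∈ Δ) (hB : B ∈ insert E Δ) :
    refW B (addCert old E cE B hB) ≤ refW B (old B hΔ) := by
  unfold addCert
  by_cases hE : B = E
  · rw [dif_pos hE, dif_pos hΔ]
    by_cases hle : refW B (old B hΔ) ≤ refW E cE
    · rw [if_pos hle]
    · rw [if_neg hle, refW_castRef]
      omega
  · rw [dif_neg hE]

theorem addCert_w_new {m : PDLModel} {v : Label → m.State} {Δ : Finset SeqElem}
    (old : ∀ B ∈ Δ, RefAt m v B) (E : SeqElem) (cE : RefAt m v E)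
    (hB : E ∈ insert E Δ) :
    refW E (addCert old E cE E hB) ≤ refW E cE := by
  unfold addCert
  rw [dif_pos rfl]
  by_cases hΔ : E ∈ Δ
  · rw [dif_pos hΔ]
    by_cases hle : refW E (old E hΔ) ≤ refW E cE
    · rwa [if_pos hle]
    · rw [if_neg hle, refW_castRef]
  · rw [dif_neg hΔ, refW_castRef]

/-- Restrict (and transport along a valuation change) the refutations of a pack. -/
noncomputable def FPack.restrict {m : PDLModel} {S : Sequent} (P : FPack m S)
    {Δ : Finset SeqElem} (hsub : Δ ⊆ S.suc) {v' : Label → m.State}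
    (hagree : ∀ B ∈ Δ, ∀ l ∈ B.labels, v' l = P.v l) :
    ∀ B ∈ Δ, RefAt m v' B :=
  fun B hB => RefAt.transport (hagree B hB) (P.ref B (hsub hB))

theorem FPack.restrict_w {m : PDLModel} {S : Sequent} (P : FPack m S)
    {Δ : Finset SeqElem} (hsub : Δ ⊆ S.suc) {v' : Label → m.State}
    (hagree : ∀ B ∈ Δ, ∀ l ∈ B.labels, v' l = P.v l) {B : SeqElem} (hB : B ∈ Δ) :
    refW B (P.restrict hsub hagree B hB) = P.mw B := by
  rw [FPack.mw_eq P (hsub hB)]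
  exact refW_transport _ _

/-! ### Pack constructors -/

noncomputable def mkPack0 {m : PDLModel} {S : Sequent} (P : FPack m S)
    (Γ' Δ' : Finset SeqElem) (hsub : Δ' ⊆ S.suc) (v' : Label → m.State)
    (hagree : ∀ B ∈ Δ', ∀ l ∈ B.labels, v' l = P.v l)
    (hant' : ∀ A ∈ Γ', A.sat m v') : FPack m ⟨Γ', Δ'⟩ :=
  ⟨v', hant', P.restrict hsub hagree⟩

theorem mkPack0_mw {m : PDLModel} {S : Sequent} (P : FPack m S)
    (Γ' Δ' : Finset SeqElem) (hsub : Δ' ⊆ S.suc) (v' : Label → m.State)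
    (hagree : ∀ B ∈ Δ', ∀ l ∈ B.labels, v' l = P.v l)
    (hant' : ∀ A ∈ Γ', A.sat m v') {B : SeqElem} (hB : B ∈ Δ') :
    (mkPack0 P Γ' Δ' hsub v' hagree hant').mw B = P.mw B := by
  rw [FPack.mw_eq _ (show B ∈ (Sequent.mk Γ' Δ').suc from hB)]
  exact P.restrict_w hsub hagree hB

noncomputable def mkPack1 {m : PDLModel} {S : Sequent} (P : FPack m S)
    (Γ' Δ' : Finset SeqElem) (hsub : Δ' ⊆ S.suc) (v' : Label → m.State)
    (hagree : ∀ B ∈ Δ', ∀ l ∈ B.labels, v' l = P.v l)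
    (hant' : ∀ A ∈ Γ', A.sat m v') (E : SeqElem) (cE : RefAt m v' E) :
    FPack m ⟨Γ', insert E Δ'⟩ :=
  ⟨v', hant', addCert (P.restrict hsub hagree) E cE⟩

theorem mkPack1_mw_mem {m : PDLModel} {S : Sequent} (P : FPack m S)
    (Γ' Δ' : Finset SeqElem) (hsub : Δ' ⊆ S.suc) (v' : Label → m.State)
    (hagree : ∀ B ∈ Δ', ∀ l ∈ B.labels, v' l = P.v l)
    (hant' : ∀ A ∈ Γ', A.sat m v') (E : SeqElem) (cE : RefAt m v' E)
    {B : SeqElem} (hB : B ∈ Δ') :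
    (mkPack1 P Γ' Δ' hsub v' hagree hant' E cE).mw B ≤ P.mw B := by
  rw [FPack.mw_eq _ (show B ∈ (Sequent.mk Γ' (insert E Δ')).suc from Finset.mem_insert_of_mem hB)]
  exact le_trans (addCert_w_mem _ _ _ hB (Finset.mem_insert_of_mem hB))
    (le_of_eq (P.restrict_w hsub hagree hB))

theorem mkPack1_mw_new {m : PDLModel} {S : Sequent} (P : FPack m S)
    (Γ' Δ' : Finset SeqElem) (hsub : Δ' ⊆ S.suc) (v' : Label → m.State)
    (hagree : ∀ B ∈ Δ', ∀ l ∈ B.labels, v' l = P.v l)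
    (hant' : ∀ A ∈ Γ', A.sat m v') (E : SeqElem) (cE : RefAt m v' E) :
    (mkPack1 P Γ' Δ' hsub v' hagree hant' E cE).mw E ≤ refW E cE := by
  rw [FPack.mw_eq _ (show E ∈ (Sequent.mk Γ' (insert E Δ')).suc from Finset.mem_insert_self _ _)]
  exact addCert_w_new _ _ _ (Finset.mem_insert_self _ _)

noncomputable def mkPack2 {m : PDLModel} {S : Sequent} (P : FPack m S)
    (Γ' Δ' : Finset SeqElem) (hsub : Δ' ⊆ S.suc) (v' : Label → m.State)
    (hagree : ∀ B ∈ Δ', ∀ l ∈ B.labels, v' l = P.v l)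
    (hant' : ∀ A ∈ Γ', A.sat m v') (E₁ E₂ : SeqElem)
    (cE₁ : RefAt m v' E₁) (cE₂ : RefAt m v' E₂) :
    FPack m ⟨Γ', insert E₁ (insert E₂ Δ')⟩ :=
  ⟨v', hant', addCert (addCert (P.restrict hsub hagree) E₂ cE₂) E₁ cE₁⟩

theorem mkPack2_mw_mem {m : PDLModel} {S : Sequent} (P : FPack m S)
    (Γ' Δ' : Finset SeqElem) (hsub : Δ' ⊆ S.suc) (v' : Label → m.State)
    (hagree : ∀ B ∈ Δ', ∀ l ∈ B.labels, v' l = P.v l)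
    (hant' : ∀ A ∈ Γ', A.sat m v') (E₁ E₂ : SeqElem)
    (cE₁ : RefAt m v' E₁) (cE₂ : RefAt m v' E₂) {B : SeqElem} (hB : B ∈ Δ') :
    (mkPack2 P Γ' Δ' hsub v' hagree hant' E₁ E₂ cE₁ cE₂).mw B ≤ P.mw B := by
  rw [FPack.mw_eq _ (show B ∈ (Sequent.mk Γ' (insert E₁ (insert E₂ Δ'))).suc from
    Finset.mem_insert_of_mem (Finset.mem_insert_of_mem hB))]
  refine le_trans (addCert_w_mem _ _ _ (Finset.mem_insert_of_mem hB)
    (Finset.mem_insert_of_mem (Finset.mem_insert_of_mem hB))) ?_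
  exact le_trans (addCert_w_mem _ _ _ hB (Finset.mem_insert_of_mem hB))
    (le_of_eq (P.restrict_w hsub hagree hB))

/-- The trivial agreement for an unchanged valuation. -/
theorem agree_refl {m : PDLModel} (v : Label → m.State) (Δ' : Finset SeqElem) :
    ∀ B ∈ Δ', ∀ l ∈ B.labels, v l = v l := fun _ _ _ _ => rfl

/-! ### Local soundness step -/

structure LocalStep {m : PDLModel} (r : RuleApp) (P : FPack m r.conc) where
  i : ℕ
  hi : i < r.prems.length
  P' : FPack m (r.prems.get ⟨i, hi⟩)
  mono : ∀ τ τ', r.tracePair i τ τ' →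
    P'.mw τ'.toElem ≤ P.mw τ.toElem ∧
      (r.progressing i τ τ' → P'.mw τ'.toElem < P.mw τ.toElem)

/-! ### Small helpers about trace values and substitution -/

theorem mem_labs {Γ : Finset SeqElem} {B : SeqElem} {l : Label}
    (hB : B ∈ Γ) (hl : l ∈ B.labels) : l ∈ labs Γ :=
  Finset.mem_biUnion.mpr ⟨B, hB, hl⟩

theorem toElem_eq_lab {τ : TraceValue} {x : Label} {φ : PDLFormula}
    (h : τ.toElem = SeqElem.lab x φ) : τ.label = x ∧ τ.toFormula = φ := by
  have h' : SeqElem.lab τ.label τ.toFormula = SeqElem.lab x φ := h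
  exact ⟨(SeqElem.lab.injEq _ _ _ _).mp h' |>.1, (SeqElem.lab.injEq _ _ _ _).mp h' |>.2⟩

def refSubst {m : PDLModel} {v : Label → m.State} (x y : Label) :
    ∀ (B : SeqElem), RefAt m v (B.subst x y) → RefAt m (fun z => v (substLabel x y z)) B
  | .rel _ _ _, c => c
  | .lab _ _, c => c

theorem refSubst_w {m : PDLModel} {v : Label → m.State} (x y : Label) :
    ∀ (B : SeqElem) (c : RefAt m v (B.subst x y)),
      refW B (refSubst x y B c) = refW (B.subst x y) c
  | .rel _ _ _, _ => rfl
  | .lab _ _, _ => rfl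

theorem sat_subst {m : PDLModel} {v : Label → m.State} (x y : Label) :
    ∀ (A : SeqElem), (A.subst x y).sat m v → A.sat m (fun z => v (substLabel x y z))
  | .rel _ _ _, h => h
  | .lab _ _, h => h

noncomputable def substPack {m : PDLModel} (x y : Label) (Γ Δ : Finset SeqElem)
    (P : FPack m (RuleApp.conc (RuleApp.subst x y Γ Δ))) : FPack m ⟨Γ, Δ⟩ :=
  ⟨fun z => P.v (substLabel x y z),
   fun A hA => sat_subst x y A (P.hant (A.subst x y) (Finset.mem_image_of_mem _ hA)),
   fun B hB => refSubst x y B (P.ref (B.subst x y) (Finset.mem_image_of_mem _ hB))⟩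

theorem substPack_mw {m : PDLModel} (x y : Label) (Γ Δ : Finset SeqElem)
    (P : FPack m (RuleApp.conc (RuleApp.subst x y Γ Δ))) {B : SeqElem} (hB : B ∈ Δ) :
    (substPack x y Γ Δ P).mw B = P.mw (B.subst x y) := by
  rw [FPack.mw_eq _ (show B ∈ (Sequent.mk Γ Δ).suc from hB),
      FPack.mw_eq P (Finset.mem_image_of_mem _ hB)]
  exact refSubst_w x y _ _

/-! ### The local soundness lemma -/

theorem local_step {m : PDLModel} (r : RuleApp) (hwf : r.wf) (P : FPack m r.conc) :
    Nonempty (LocalStep r P) := by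
  cases r with
  | ax A =>
      exact absurd (P.hant A (Finset.mem_singleton_self A))
        (refAt_not_sat A (P.ref A (Finset.mem_singleton_self A)))
  | botL x =>
      exact absurd (P.hant (SeqElem.lab x PDLFormula.bot) (Finset.mem_singleton_self _))
        (Set.notMem_empty _)
  | wl A Γ Δ =>
      refine ⟨⟨0, by simp [RuleApp.prems], mkPack0 P Γ Δ (Finset.Subset.refl Δ) P.v (agree_refl _ _)
        (fun A' hA' => P.hant A' (Finset.mem_insert_of_mem hA')), ?_⟩⟩
      rintro τ τ' ⟨-, hτ, rfl⟩
      exact ⟨(mkPack0_mw _ _ _ _ _ _ _ hτ).le, fun hp => (hp : False).elim⟩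
  | wr A Γ Δ =>
      refine ⟨⟨0, by simp [RuleApp.prems], mkPack0 P Γ Δ (Finset.subset_insert A Δ) P.v (agree_refl _ _)
        P.hant, ?_⟩⟩
      rintro τ τ' ⟨-, hτ, rfl⟩
      exact ⟨(mkPack0_mw _ _ _ _ _ _ _ hτ).le, fun hp => (hp : False).elim⟩
  | andL x φ ψ Γ Δ =>
      have hs : P.v x ∈ PDLFormula.sem m (.and φ ψ) :=
        P.hant _ (Finset.mem_insert_self _ _)
      refine ⟨⟨0, by simp [RuleApp.prems], mkPack0 P _ Δ (Finset.Subset.refl Δ) P.v (agree_refl _ _) ?_, ?_⟩⟩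
      · intro A hA
        rcases Finset.mem_insert.mp hA with rfl | hA
        · exact hs.1
        rcases Finset.mem_insert.mp hA with rfl | hA
        · exact hs.2
        · exact P.hant A (Finset.mem_insert_of_mem hA)
      · rintro τ τ' ⟨-, hτ, rfl⟩
        exact ⟨(mkPack0_mw _ _ _ _ _ _ _ hτ).le, fun hp => (hp : False).elim⟩
  | andR x φ ψ Γ Δ =>
      have hp : SeqElem.lab x (.and φ ψ) ∈ insert (SeqElem.lab x (.and φ ψ)) Δ :=
        Finset.mem_insert_self _ _
      cases hC : (P.ref _ hp : Cex m (P.v x) (.and φ ψ)) with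
      | andl c =>
          refine ⟨⟨0, by simp [RuleApp.prems], mkPack1 P Γ Δ (Finset.subset_insert _ _) P.v (agree_refl _ _)
            P.hant (SeqElem.lab x φ) c, ?_⟩⟩
          rintro τ τ' ⟨-, hτ, rfl⟩
          exact ⟨mkPack1_mw_mem _ _ _ _ _ _ _ _ _ hτ, fun hpr => (hpr : False).elim⟩
      | andr c =>
          refine ⟨⟨1, by simp [RuleApp.prems], mkPack1 P Γ Δ (Finset.subset_insert _ _) P.v (agree_refl _ _)
            P.hant (SeqElem.lab x ψ) c, ?_⟩⟩
          rintro τ τ' ⟨-, hτ, rfl⟩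
          exact ⟨mkPack1_mw_mem _ _ _ _ _ _ _ _ _ hτ, fun hpr => (hpr : False).elim⟩
  | orL x φ ψ Γ Δ =>
      have hs : P.v x ∈ PDLFormula.sem m (.or φ ψ) :=
        P.hant _ (Finset.mem_insert_self _ _)
      rcases hs with hs | hs
      · refine ⟨⟨0, by simp [RuleApp.prems], mkPack0 P _ Δ (Finset.Subset.refl Δ) P.v (agree_refl _ _) ?_, ?_⟩⟩
        · intro A hA
          rcases Finset.mem_insert.mp hA with rfl | hA
          · exact hs
          · exact P.hant A (Finset.mem_insert_of_mem hA)
        · rintro τ τ' ⟨-, hτ, rfl⟩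
          exact ⟨(mkPack0_mw _ _ _ _ _ _ _ hτ).le, fun hpr => (hpr : False).elim⟩
      · refine ⟨⟨1, by simp [RuleApp.prems], mkPack0 P _ Δ (Finset.Subset.refl Δ) P.v (agree_refl _ _) ?_, ?_⟩⟩
        · intro A hA
          rcases Finset.mem_insert.mp hA with rfl | hA
          · exact hs
          · exact P.hant A (Finset.mem_insert_of_mem hA)
        · rintro τ τ' ⟨-, hτ, rfl⟩
          exact ⟨(mkPack0_mw _ _ _ _ _ _ _ hτ).le, fun hpr => (hpr : False).elim⟩
  | orR x φ ψ Γ Δ =>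
      have hp : SeqElem.lab x (.or φ ψ) ∈ insert (SeqElem.lab x (.or φ ψ)) Δ :=
        Finset.mem_insert_self _ _
      cases hC : (P.ref _ hp : Cex m (P.v x) (.or φ ψ)) with
      | or c1 c2 =>
          refine ⟨⟨0, by simp [RuleApp.prems], mkPack2 P Γ Δ (Finset.subset_insert _ _) P.v (agree_refl _ _)
            P.hant (SeqElem.lab x φ) (SeqElem.lab x ψ) c1 c2, ?_⟩⟩
          rintro τ τ' ⟨-, hτ, rfl⟩
          exact ⟨mkPack2_mw_mem _ _ _ _ _ _ _ _ _ _ _ hτ, fun hpr => (hpr : False).elim⟩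
  | impL x φ ψ Γ Δ =>
      have hs : P.v x ∈ PDLFormula.sem m (.imp φ ψ) :=
        P.hant _ (Finset.mem_insert_self _ _)
      rcases hs with hs | hs
      · refine ⟨⟨0, by simp [RuleApp.prems], mkPack1 P Γ Δ (Finset.Subset.refl Δ) P.v (agree_refl _ _)
          (fun A hA => P.hant A (Finset.mem_insert_of_mem hA))
          (SeqElem.lab x φ) (mkRef _ hs), ?_⟩⟩
        rintro τ τ' ⟨-, hτ, rfl⟩
        exact ⟨mkPack1_mw_mem _ _ _ _ _ _ _ _ _ hτ, fun hpr => (hpr : False).elim⟩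
      · refine ⟨⟨1, by simp [RuleApp.prems], mkPack0 P _ Δ (Finset.Subset.refl Δ) P.v (agree_refl _ _) ?_, ?_⟩⟩
        · intro A hA
          rcases Finset.mem_insert.mp hA with rfl | hA
          · exact hs
          · exact P.hant A (Finset.mem_insert_of_mem hA)
        · rintro τ τ' ⟨-, hτ, rfl⟩
          exact ⟨(mkPack0_mw _ _ _ _ _ _ _ hτ).le, fun hpr => (hpr : False).elim⟩
  | impR x φ ψ Γ Δ =>
      have hp : SeqElem.lab x (.imp φ ψ) ∈ insert (SeqElem.lab x (.imp φ ψ)) Δ :=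
        Finset.mem_insert_self _ _
      cases hC : (P.ref _ hp : Cex m (P.v x) (.imp φ ψ)) with
      | imp hφ c =>
          refine ⟨⟨0, by simp [RuleApp.prems], mkPack1 P _ Δ (Finset.subset_insert _ _) P.v (agree_refl _ _)
            ?_ (SeqElem.lab x ψ) c, ?_⟩⟩
          · intro A hA
            rcases Finset.mem_insert.mp hA with rfl | hA
            · exact hφ
            · exact P.hant A hA
          · rintro τ τ' ⟨-, hτ, rfl⟩
            exact ⟨mkPack1_mw_mem _ _ _ _ _ _ _ _ _ hτ, fun hpr => (hpr : False).elim⟩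
  | boxL x a y φ Γ Δ =>
      have hbox : P.v x ∈ PDLFormula.sem m (.box (.atom a) φ) :=
        P.hant _ (Finset.mem_insert_self _ _)
      have hrel : (P.v x, P.v y) ∈ m.progI a :=
        P.hant (SeqElem.rel x a y)
          (Finset.mem_insert_of_mem (Finset.mem_insert_self _ _))
      refine ⟨⟨0, by simp [RuleApp.prems], mkPack0 P _ Δ (Finset.Subset.refl Δ) P.v (agree_refl _ _) ?_, ?_⟩⟩
      · intro A hA
        rcases Finset.mem_insert.mp hA with rfl | hA
        · exact hbox _ hrel
        · exact P.hant A (Finset.mem_insert_of_mem (Finset.mem_insert_of_mem hA))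
      · rintro τ τ' ⟨-, hτ, rfl⟩
        exact ⟨(mkPack0_mw _ _ _ _ _ _ _ hτ).le, fun hpr => (hpr : False).elim⟩
  | boxR x a y φ Γ Δ =>
      obtain ⟨hyΓ, hyΔ, hyx⟩ := hwf
      have hp : SeqElem.lab x (.box (.atom a) φ) ∈ insert (SeqElem.lab x (.box (.atom a) φ)) Δ :=
        Finset.mem_insert_self _ _
      have hmw : P.mw (SeqElem.lab x (.box (.atom a) φ)) = Cex.w (P.ref _ hp) :=
        FPack.mw_eq P hp
      cases hC : (P.ref _ hp : Cex m (P.v x) (.box (.atom a) φ)) with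
      | box pth c0 =>
        cases pth with
        | atom hat =>
          rename_i t
          have hagree : ∀ B ∈ Δ, ∀ l ∈ B.labels, Function.update P.v y t l = P.v l := by
            intro B hB l hl
            exact Function.update_of_ne (fun h : l = y => hyΔ (h ▸ mem_labs hB hl)) _ _
          have hyval : Function.update P.v y t y = t := Function.update_self y t P.v
          have hxval : Function.update P.v y t x = P.v x :=
            Function.update_of_ne (Ne.symm hyx) _ _
          have hant' : ∀ A ∈ insert (SeqElem.rel x a y) Γ,
              A.sat m (Function.update P.v y t) := by
            intro A hA
            rcases Finset.mem_insert.mp hA with rfl | hA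
            · show (Function.update P.v y t x, Function.update P.v y t y) ∈ m.progI a
              rw [hyval, hxval]
              exact hat
            · exact sat_transport
                (fun l hl => Function.update_of_ne (fun h : l = y => hyΓ (h ▸ mem_labs hA hl)) _ _)
                (P.hant A hA)
          refine ⟨⟨0, by simp [RuleApp.prems], mkPack1 P _ Δ (Finset.subset_insert _ _)
            (Function.update P.v y t) hagree hant'
            (SeqElem.lab y φ) (show Cex m (Function.update P.v y t y) φ from hyval.symm ▸ c0), ?_⟩⟩
          rintro τ τ' ⟨-, (⟨hτ, rfl⟩ | ⟨hE, rfl⟩)⟩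
          · exact ⟨mkPack1_mw_mem _ _ _ _ _ _ _ _ _ hτ, fun hpr => (hpr : False).elim⟩
          · obtain ⟨hl, hf⟩ := toElem_eq_lab hE
            have hτel : (TraceValue.mk x (PDLProgram.atom a :: τ'.spine) τ'.focus
                τ'.formula).toElem = SeqElem.lab x (.box (.atom a) φ) := by
              show SeqElem.lab x (.box (.atom a) τ'.toFormula) = _
              rw [hf]
            rw [hτel, hE]
            refine ⟨le_trans (mkPack1_mw_new _ _ _ _ _ _ _ _ _) ?_,
              fun hpr => (hpr : False).elim⟩
            show Cex.w (hyval.symm ▸ c0) ≤ _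
            rw [cex_w_cast, hmw, hC]
            simp [refW, Cex.w, CPath.w]
  | compL x α β φ Γ Δ =>
      have hs : P.v x ∈ PDLFormula.sem m (.box (.comp α β) φ) :=
        P.hant _ (Finset.mem_insert_self _ _)
      refine ⟨⟨0, by simp [RuleApp.prems], mkPack0 P _ Δ (Finset.Subset.refl Δ) P.v (agree_refl _ _) ?_, ?_⟩⟩
      · intro A hA
        rcases Finset.mem_insert.mp hA with rfl | hA
        · intro u hu t ht
          exact hs t ⟨u, hu, ht⟩
        · exact P.hant A (Finset.mem_insert_of_mem hA)
      · rintro τ τ' ⟨-, hτ, rfl⟩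
        exact ⟨(mkPack0_mw _ _ _ _ _ _ _ hτ).le, fun hpr => (hpr : False).elim⟩
  | compR x α β φ Γ Δ =>
      have hp : SeqElem.lab x (.box (.comp α β) φ)
          ∈ insert (SeqElem.lab x (.box (.comp α β) φ)) Δ := Finset.mem_insert_self _ _
      have hmw : P.mw (SeqElem.lab x (.box (.comp α β) φ)) = Cex.w (P.ref _ hp) :=
        FPack.mw_eq P hp
      cases hC : (P.ref _ hp : Cex m (P.v x) (.box (.comp α β) φ)) with
      | box pth c0 =>
        cases pth with
        | comp p q =>
          refine ⟨⟨0, by simp [RuleApp.prems], mkPack1 P Γ Δ (Finset.subset_insert _ _) P.v (agree_refl _ _)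
            P.hant (SeqElem.lab x (.box α (.box β φ))) (Cex.box p (Cex.box q c0)), ?_⟩⟩
          rintro τ τ' ⟨-, (⟨hτ, rfl⟩ | ⟨σ, hσ, rfl, rfl⟩)⟩
          · exact ⟨mkPack1_mw_mem _ _ _ _ _ _ _ _ _ hτ, fun hpr => (hpr : False).elim⟩
          · obtain ⟨hl, hf⟩ := toElem_eq_lab hσ
            have hτel : (σ.push (PDLProgram.comp α β)).toElem
                = SeqElem.lab x (.box (.comp α β) φ) := by
              show SeqElem.lab σ.label (.box (.comp α β) σ.toFormula) = _
              rw [hl, hf]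
            have hτ'el : ((σ.push β).push α).toElem
                = SeqElem.lab x (.box α (.box β φ)) := by
              show SeqElem.lab σ.label (.box α (.box β σ.toFormula)) = _
              rw [hl, hf]
            rw [hτel, hτ'el]
            refine ⟨le_trans (mkPack1_mw_new _ _ _ _ _ _ _ _ _) ?_,
              fun hpr => (hpr : False).elim⟩
            rw [hmw, hC]
            simp [refW, Cex.w, CPath.w]
            omega
  | choiceL x α β φ Γ Δ =>
      have hs : P.v x ∈ PDLFormula.sem m (.box (.choice α β) φ) :=
        P.hant _ (Finset.mem_insert_self _ _)
      refine ⟨⟨0, by simp [RuleApp.prems], mkPack0 P _ Δ (Finset.Subset.refl Δ) P.v (agree_refl _ _) ?_, ?_⟩⟩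
      · intro A hA
        rcases Finset.mem_insert.mp hA with rfl | hA
        · exact fun t ht => hs t (Or.inl ht)
        rcases Finset.mem_insert.mp hA with rfl | hA
        · exact fun t ht => hs t (Or.inr ht)
        · exact P.hant A (Finset.mem_insert_of_mem hA)
      · rintro τ τ' ⟨-, hτ, rfl⟩
        exact ⟨(mkPack0_mw _ _ _ _ _ _ _ hτ).le, fun hpr => (hpr : False).elim⟩
  | choiceR x α β φ Γ Δ =>
      have hp : SeqElem.lab x (.box (.choice α β) φ)
          ∈ insert (SeqElem.lab x (.box (.choice α β) φ)) Δ := Finset.mem_insert_self _ _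
      have hmw : P.mw (SeqElem.lab x (.box (.choice α β) φ)) = Cex.w (P.ref _ hp) :=
        FPack.mw_eq P hp
      cases hC : (P.ref _ hp : Cex m (P.v x) (.box (.choice α β) φ)) with
      | box pth c0 =>
        cases pth with
        | choicel p =>
          refine ⟨⟨0, by simp [RuleApp.prems], mkPack1 P Γ Δ (Finset.subset_insert _ _) P.v (agree_refl _ _)
            P.hant (SeqElem.lab x (.box α φ)) (Cex.box p c0), ?_⟩⟩
          rintro τ τ' ⟨-, (⟨hτ, rfl⟩ | ⟨σ, hσ, rfl, rfl⟩)⟩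
          · exact ⟨mkPack1_mw_mem _ _ _ _ _ _ _ _ _ hτ, fun hpr => (hpr : False).elim⟩
          · obtain ⟨hl, hf⟩ := toElem_eq_lab hσ
            have hτel : (σ.push (PDLProgram.choice α β)).toElem
                = SeqElem.lab x (.box (.choice α β) φ) := by
              show SeqElem.lab σ.label (.box (.choice α β) σ.toFormula) = _
              rw [hl, hf]
            have hτ'el : (σ.push (if 0 = 0 then α else β)).toElem
                = SeqElem.lab x (.box α φ) := by
              show SeqElem.lab σ.label (.box (if 0 = 0 then α else β) σ.toFormula) = _
              rw [hl, hf, if_pos rfl]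
            rw [hτel, hτ'el]
            refine ⟨le_trans (mkPack1_mw_new _ _ _ _ _ _ _ _ _) ?_,
              fun hpr => (hpr : False).elim⟩
            rw [hmw, hC]
            simp [refW, Cex.w, CPath.w]
        | choicer p =>
          refine ⟨⟨1, by simp [RuleApp.prems], mkPack1 P Γ Δ (Finset.subset_insert _ _) P.v (agree_refl _ _)
            P.hant (SeqElem.lab x (.box β φ)) (Cex.box p c0), ?_⟩⟩
          rintro τ τ' ⟨-, (⟨hτ, rfl⟩ | ⟨σ, hσ, rfl, rfl⟩)⟩
          · exact ⟨mkPack1_mw_mem _ _ _ _ _ _ _ _ _ hτ, fun hpr => (hpr : False).elim⟩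
          · obtain ⟨hl, hf⟩ := toElem_eq_lab hσ
            have hτel : (σ.push (PDLProgram.choice α β)).toElem
                = SeqElem.lab x (.box (.choice α β) φ) := by
              show SeqElem.lab σ.label (.box (.choice α β) σ.toFormula) = _
              rw [hl, hf]
            have hτ'el : (σ.push (if 1 = 0 then α else β)).toElem
                = SeqElem.lab x (.box β φ) := by
              show SeqElem.lab σ.label (.box (if 1 = 0 then α else β) σ.toFormula) = _
              rw [hl, hf, if_neg (by decide)]
            rw [hτel, hτ'el]
            refine ⟨le_trans (mkPack1_mw_new _ _ _ _ _ _ _ _ _) ?_,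
              fun hpr => (hpr : False).elim⟩
            rw [hmw, hC]
            simp [refW, Cex.w, CPath.w]
  | testL x φ ψ Γ Δ =>
      have hs : P.v x ∈ PDLFormula.sem m (.box (.test φ) ψ) :=
        P.hant _ (Finset.mem_insert_self _ _)
      by_cases hφ : P.v x ∈ PDLFormula.sem m φ
      · refine ⟨⟨1, by simp [RuleApp.prems], mkPack0 P _ Δ (Finset.Subset.refl Δ) P.v (agree_refl _ _) ?_, ?_⟩⟩
        · intro A hA
          rcases Finset.mem_insert.mp hA with rfl | hA
          · exact hs (P.v x) ⟨rfl, hφ⟩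
          · exact P.hant A (Finset.mem_insert_of_mem hA)
        · rintro τ τ' ⟨-, hτ, rfl⟩
          exact ⟨(mkPack0_mw _ _ _ _ _ _ _ hτ).le, fun hpr => (hpr : False).elim⟩
      · refine ⟨⟨0, by simp [RuleApp.prems], mkPack1 P Γ Δ (Finset.Subset.refl Δ) P.v (agree_refl _ _)
          (fun A hA => P.hant A (Finset.mem_insert_of_mem hA))
          (SeqElem.lab x φ) (mkRef _ hφ), ?_⟩⟩
        rintro τ τ' ⟨-, hτ, rfl⟩
        exact ⟨mkPack1_mw_mem _ _ _ _ _ _ _ _ _ hτ, fun hpr => (hpr : False).elim⟩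
  | testR x φ ψ Γ Δ =>
      have hp : SeqElem.lab x (.box (.test φ) ψ)
          ∈ insert (SeqElem.lab x (.box (.test φ) ψ)) Δ := Finset.mem_insert_self _ _
      have hmw : P.mw (SeqElem.lab x (.box (.test φ) ψ)) = Cex.w (P.ref _ hp) :=
        FPack.mw_eq P hp
      cases hC : (P.ref _ hp : Cex m (P.v x) (.box (.test φ) ψ)) with
      | box pth c0 =>
        cases pth with
        | test hφ =>
          refine ⟨⟨0, by simp [RuleApp.prems], mkPack1 P _ Δ (Finset.subset_insert _ _) P.v (agree_refl _ _)
            ?_ (SeqElem.lab x ψ) c0, ?_⟩⟩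
          · intro A hA
            rcases Finset.mem_insert.mp hA with rfl | hA
            · exact hφ
            · exact P.hant A hA
          · rintro τ τ' ⟨-, (⟨hτ, rfl⟩ | ⟨hE, rfl⟩)⟩
            · exact ⟨mkPack1_mw_mem _ _ _ _ _ _ _ _ _ hτ, fun hpr => (hpr : False).elim⟩
            · obtain ⟨hl, hf⟩ := toElem_eq_lab hE
              have hτel : (τ'.push (PDLProgram.test φ)).toElem
                  = SeqElem.lab x (.box (.test φ) ψ) := by
                show SeqElem.lab τ'.label (.box (.test φ) τ'.toFormula) = _
                rw [hl, hf]
              rw [hτel, hE]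
              refine ⟨le_trans (mkPack1_mw_new _ _ _ _ _ _ _ _ _) ?_,
                fun hpr => (hpr : False).elim⟩
              rw [hmw, hC]
              simp [refW, Cex.w, CPath.w]
  | starL x α φ Γ Δ =>
      have hs : P.v x ∈ PDLFormula.sem m (.box (.star α) φ) :=
        P.hant _ (Finset.mem_insert_self _ _)
      refine ⟨⟨0, by simp [RuleApp.prems], mkPack0 P _ Δ (Finset.Subset.refl Δ) P.v (agree_refl _ _) ?_, ?_⟩⟩
      · intro A hA
        rcases Finset.mem_insert.mp hA with rfl | hA
        · exact hs (P.v x) Relation.ReflTransGen.refl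
        rcases Finset.mem_insert.mp hA with rfl | hA
        · intro u hu t ht
          exact hs t (Relation.ReflTransGen.head hu ht)
        · exact P.hant A (Finset.mem_insert_of_mem hA)
      · rintro τ τ' ⟨-, hτ, rfl⟩
        exact ⟨(mkPack0_mw _ _ _ _ _ _ _ hτ).le, fun hpr => (hpr : False).elim⟩
  | starR x α φ Γ Δ =>
      have hp : SeqElem.lab x (.box (.star α) φ)
          ∈ insert (SeqElem.lab x (.box (.star α) φ)) Δ := Finset.mem_insert_self _ _
      have hmw : P.mw (SeqElem.lab x (.box (.star α) φ)) = Cex.w (P.ref _ hp) :=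
        FPack.mw_eq P hp
      cases hC : (P.ref _ hp : Cex m (P.v x) (.box (.star α) φ)) with
      | box pth c0 =>
        cases pth with
        | star_refl =>
          refine ⟨⟨0, by simp [RuleApp.prems], mkPack1 P Γ Δ (Finset.subset_insert _ _) P.v (agree_refl _ _)
            P.hant (SeqElem.lab x φ) c0, ?_⟩⟩
          rintro τ τ' (⟨-, (⟨hτ, rfl⟩ | ⟨hE, rfl⟩)⟩ | ⟨h, -⟩)
          · exact ⟨mkPack1_mw_mem _ _ _ _ _ _ _ _ _ hτ,
              fun hpr => absurd hpr.1 (by decide)⟩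
          · obtain ⟨hl, hf⟩ := toElem_eq_lab hE
            have hτel : (τ'.push (PDLProgram.star α)).toElem
                = SeqElem.lab x (.box (.star α) φ) := by
              show SeqElem.lab τ'.label (.box (.star α) τ'.toFormula) = _
              rw [hl, hf]
            rw [hτel, hE]
            refine ⟨le_trans (mkPack1_mw_new _ _ _ _ _ _ _ _ _) ?_,
              fun hpr => absurd hpr.1 (by decide)⟩
            rw [hmw, hC]
            simp [refW, Cex.w, CPath.w]
          · exact absurd h (by decide)
        | star_step p q =>
          refine ⟨⟨1, by simp [RuleApp.prems], mkPack1 P Γ Δ (Finset.subset_insert _ _) P.v (agree_refl _ _)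
            P.hant (SeqElem.lab x (.box α (.box (.star α) φ)))
            (Cex.box p (Cex.box q c0)), ?_⟩⟩
          rintro τ τ' (⟨h, -⟩ | ⟨-, (⟨hτ, rfl⟩ | ⟨hE, rfl⟩)⟩)
          · exact absurd h (by decide)
          · refine ⟨mkPack1_mw_mem _ _ _ _ _ _ _ _ _ hτ, ?_⟩
            rintro ⟨-, rfl, habs⟩
            have := congrArg (fun σ => σ.spine.length) habs
            simp [TraceValue.push] at this
          · have hτ'el : (τ.push α).toElem
                = SeqElem.lab x (.box α (.box (.star α) φ)) := by
              obtain ⟨hl, hf⟩ := toElem_eq_lab hE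
              show SeqElem.lab τ.label (.box α τ.toFormula) = _
              rw [hl, hf]
            rw [hτ'el, hE]
            have hle : (mkPack1 P Γ Δ (Finset.subset_insert _ _) P.v (agree_refl _ _)
                P.hant (SeqElem.lab x (.box α (.box (.star α) φ)))
                (Cex.box p (Cex.box q c0))).mw (SeqElem.lab x (.box α (.box (.star α) φ)))
                < P.mw (SeqElem.lab x (.box (.star α) φ)) := by
              refine lt_of_le_of_lt (mkPack1_mw_new _ _ _ _ _ _ _ _ _) ?_
              rw [hmw, hC]
              simp [refW, Cex.w, CPath.w]
              omega
            exact ⟨hle.le, fun _ => hle⟩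
  | subst x y Γ Δ =>
      refine ⟨⟨0, by simp [RuleApp.prems], substPack x y Γ Δ P, ?_⟩⟩
      rintro τ τ' ⟨-, hτ'Δ, rfl⟩
      refine ⟨?_, fun hpr => (hpr : False).elim⟩
      show @FPack.mw m (Sequent.mk Γ Δ) (substPack x y Γ Δ P) τ'.toElem
        ≤ P.mw (SeqElem.subst x y τ'.toElem)
      exact le_of_eq (substPack_mw x y Γ Δ P hτ'Δ)
  | cut A Γ Δ Γ₂ Δ₂ =>
      by_cases hA : A.sat m P.v
      · refine ⟨⟨1, by simp [RuleApp.prems], mkPack0 P _ Δ₂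
          (Finset.subset_union_right) P.v (agree_refl _ _) ?_, ?_⟩⟩
        · intro A' hA'
          rcases Finset.mem_insert.mp hA' with rfl | hA'
          · exact hA
          · exact P.hant A' (Finset.mem_union_right _ hA')
        · rintro τ τ' (⟨h, -⟩ | ⟨-, hτ, rfl⟩)
          · exact absurd h (by decide)
          · exact ⟨(mkPack0_mw _ _ _ _ _ _ _ hτ).le, fun hpr => (hpr : False).elim⟩
      · refine ⟨⟨0, by simp [RuleApp.prems], mkPack1 P Γ Δ
          (Finset.subset_union_left) P.v (agree_refl _ _)
          (fun A' hA' => P.hant A' (Finset.mem_union_left _ hA')) A (mkRef A hA), ?_⟩⟩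
        rintro τ τ' (⟨-, hτ, rfl⟩ | ⟨h, -⟩)
        · exact ⟨mkPack1_mw_mem _ _ _ _ _ _ _ _ _ hτ, fun hpr => (hpr : False).elim⟩
        · exact absurd h (by decide)

/-! ### Unfolding plumbing -/

theorem unfoldAddr_append (D : Deriv) (c : List ℕ → Option (List ℕ)) (p : List ℕ) (i : ℕ) :
    D.unfoldAddr c (p ++ [i]) = (D.unfoldAddr c p).bind (fun q => D.deref c (q ++ [i])) := by
  unfold Deriv.unfoldAddr
  rw [List.foldl_append]
  rfl

theorem node_to_rule {D : Deriv} {c : List ℕ → Option (List ℕ)}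
    (hcomp : CompanionCond D c) (hfull : FullCompanion D c)
    {p : List ℕ} {d : DNode} (hd : D.node p = some d) :
    ∃ q r, D.deref c p = some q ∧ D.node q = some (Sum.inl r) ∧ RuleApp.conc r = d.concl := by
  cases d with
  | inl r => exact ⟨p, r, by simp [Deriv.deref, hd], hd, rfl⟩
  | inr S =>
      obtain ⟨q, hq⟩ := hfull p S hd
      obtain ⟨r, hr, hconc⟩ := hcomp p S hd q hq
      exact ⟨q, r, by simp [Deriv.deref, hd, hq], hr, hconc⟩

theorem step_lemma {D : Deriv} {c : List ℕ → Option (List ℕ)}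
    (hcomp : CompanionCond D c) (hfull : FullCompanion D c)
    {p q : List ℕ} {r : RuleApp}
    (hq : D.unfoldAddr c p = some q) (hr : D.node q = some (Sum.inl r))
    {i : ℕ} (hi : i < r.prems.length) :
    ∃ q' r', D.unfoldAddr c (p ++ [i]) = some q' ∧ D.node q' = some (Sum.inl r') ∧
      RuleApp.conc r' = r.prems.get ⟨i, hi⟩ := by
  have hch := D.children q r hr i
  rw [List.getElem?_eq_getElem hi] at hch
  obtain ⟨d, hd, hdc⟩ := Option.map_eq_some_iff.mp hch
  obtain ⟨q', r', hder, hq', hconc⟩ := node_to_rule hcomp hfull hd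
  refine ⟨q', r', ?_, hq', by rw [hconc, hdc, List.get_eq_getElem]⟩
  rw [unfoldAddr_append, hq]
  exact hder

theorem root_lemma {D : Deriv} {c : List ℕ → Option (List ℕ)} {S : Sequent}
    (hcomp : CompanionCond D c) (hfull : FullCompanion D c)
    (hroot : D.seqAt [] = some S) :
    ∃ q r, D.unfoldAddr c [] = some q ∧ D.node q = some (Sum.inl r) ∧ RuleApp.conc r = S := by
  unfold Deriv.seqAt at hroot
  obtain ⟨d, hd, hdc⟩ := Option.map_eq_some_iff.mp hroot
  obtain ⟨q, r, hder, hq, hconc⟩ := node_to_rule hcomp hfull hd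
  exact ⟨q, r, hder, hq, by rw [hconc, hdc]⟩

/-! ### Building the infinite falsified path -/

def FPack.castSeq {m : PDLModel} {S S' : Sequent} (h : S = S') (P : FPack m S) :
    FPack m S' := h ▸ P

theorem FPack.castSeq_mw {m : PDLModel} {S S' : Sequent} (h : S = S') (P : FPack m S)
    (E : SeqElem) : (FPack.castSeq h P).mw E = P.mw E := by cases h; rfl

structure FState (D : Deriv) (c : List ℕ → Option (List ℕ)) (m : PDLModel) where
  p : List ℕ
  q : List ℕ
  r : RuleApp
  hq : D.unfoldAddr c p = some q
  hr : D.node q = some (Sum.inl r)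
  P : FPack m r.conc

def FRel {D : Deriv} {c : List ℕ → Option (List ℕ)} {m : PDLModel}
    (st st' : FState D c m) : Prop :=
  ∃ i, st'.p = st.p ++ [i] ∧
    ∀ τ τ', st.r.tracePair i τ τ' →
      st'.P.mw τ'.toElem ≤ st.P.mw τ.toElem ∧
        (st.r.progressing i τ τ' → st'.P.mw τ'.toElem < st.P.mw τ.toElem)

noncomputable def fstep {D : Deriv} {c : List ℕ → Option (List ℕ)} {m : PDLModel}
    (hcomp : CompanionCond D c) (hfull : FullCompanion D c)
    (st : FState D c m) : { st' : FState D c m // FRel st st' } :=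
  let ls := Classical.choice (local_step st.r (D.wf_rule st.q st.r st.hr) st.P)
  let h := step_lemma hcomp hfull st.hq st.hr ls.hi
  ⟨⟨st.p ++ [ls.i], h.choose, h.choose_spec.choose, h.choose_spec.choose_spec.1,
    h.choose_spec.choose_spec.2.1,
    FPack.castSeq h.choose_spec.choose_spec.2.2.symm ls.P'⟩,
   ls.i, rfl, fun τ τ' htp => by
     rw [FPack.castSeq_mw]
     exact ls.mono τ τ' htp⟩

noncomputable def chain {D : Deriv} {c : List ℕ → Option (List ℕ)} {m : PDLModel}
    (hcomp : CompanionCond D c) (hfull : FullCompanion D c)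
    (st0 : FState D c m) : ℕ → FState D c m
  | 0 => st0
  | n + 1 => (fstep hcomp hfull (chain hcomp hfull st0 n)).1

theorem chain_rel {D : Deriv} {c : List ℕ → Option (List ℕ)} {m : PDLModel}
    (hcomp : CompanionCond D c) (hfull : FullCompanion D c)
    (st0 : FState D c m) (n : ℕ) :
    FRel (chain hcomp hfull st0 n) (chain hcomp hfull st0 (n + 1)) :=
  (fstep hcomp hfull (chain hcomp hfull st0 n)).2

end Soundness

/-- **Soundness of the cyclic system `G3PDLω`**: if a sequent `Γ ⊢ Δ` is derivable in `G3PDLω`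
(i.e. has a cyclic proof whose infinite unfolding satisfies the global trace condition), then
`Γ ⊢ Δ` is valid. -/
theorem G3PDLomega_soundness (S : Sequent) (hS : CyclicDerivable S) :
    S.valid := by
  classical
  obtain ⟨D, c, hroot, -, hcomp, hfull, hgtc⟩ := hS
  intro m v hant
  by_contra hcon
  push_neg at hcon
  obtain ⟨q0, r0, hu0, hn0, hc0⟩ := root_lemma hcomp hfull hroot
  let P0 : FPack m S := ⟨v, hant, fun B hB => mkRef B (hcon B hB)⟩
  let st0 : FState D c m := ⟨[], q0, r0, hu0, hn0, FPack.castSeq hc0.symm P0⟩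
  let ch : ℕ → FState D c m := chain hcomp hfull st0
  have hrel : ∀ n, FRel (ch n) (ch (n + 1)) := fun n => chain_rel hcomp hfull st0 n
  let f : ℕ → ℕ := fun n => (hrel n).choose
  have hpstep : ∀ n, (ch (n + 1)).p = (ch n).p ++ [f n] := fun n => (hrel n).choose_spec.1
  have hmono : ∀ n τ τ', (ch n).r.tracePair (f n) τ τ' →
      (ch (n + 1)).P.mw τ'.toElem ≤ (ch n).P.mw τ.toElem ∧
        ((ch n).r.progressing (f n) τ τ' →
          (ch (n + 1)).P.mw τ'.toElem < (ch n).P.mw τ.toElem) :=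
    fun n => (hrel n).choose_spec.2
  have hp : ∀ n, (ch n).p = pathAddr f n := by
    intro n
    induction n with
    | zero => rfl
    | succ n ih => rw [hpstep n, ih]; simp [pathAddr, List.range_succ]
  have hur : ∀ n, D.unfoldRule c (pathAddr f n) = some ((ch n).r) := by
    intro n
    simp only [Deriv.unfoldRule]
    rw [← hp n, (ch n).hq]
    simp [Deriv.ruleAt, (ch n).hr]
  have hinf : IsInfPath (D.unfoldRule c) f := fun n => by rw [hur n]; rfl
  obtain ⟨N, g, htr, hprog⟩ := hgtc f hinf
  let μ : ℕ → ℕ := fun k => (ch (N + k)).P.mw ((g k).toElem)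
  have hdec : ∀ k, μ (k + 1) ≤ μ k := by
    intro k
    obtain ⟨r, hru, htp⟩ := htr k
    rw [hur (N + k)] at hru
    cases Option.some.inj hru
    exact (hmono (N + k) _ _ htp).1
  have hdec' : ∀ a b, a ≤ b → μ b ≤ μ a := by
    intro a b hab
    induction b, hab using Nat.le_induction with
    | base => exact le_rfl
    | succ b hb ih => exact le_trans (hdec b) ih
  have hstrict : ∀ k0, ∃ k, k0 ≤ k ∧ μ (k + 1) < μ k := by
    intro k0
    obtain ⟨k, hk, r, hru, hpr⟩ := hprog k0
    rw [hur (N + k)] at hru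
    cases Option.some.inj hru
    obtain ⟨r', hru', htp⟩ := htr k
    rw [hur (N + k)] at hru'
    cases Option.some.inj hru'
    exact ⟨k, hk, (hmono (N + k) _ _ htp).2 hpr⟩
  have key : ∀ n k, μ k ≤ n → False := by
    intro n
    induction n with
    | zero =>
        intro k hk
        obtain ⟨k', hk', hlt⟩ := hstrict k
        have := lt_of_lt_of_le hlt (le_trans (hdec' k k' hk') hk)
        omega
    | succ n ih =>
        intro k hk
        obtain ⟨k', hk', hlt⟩ := hstrict k
        exact ih (k' + 1) (by have := le_trans (hdec' k k' hk') hk; omega)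
  exact key (μ 0) 0 le_rfl
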